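/- arXiv:2108.01642 — 7 statements merged into one kernel-verified Lean document; each statement's English description precedes it below -/
import Mathlib

section
/- Let k ∈ ℕ and δ < 1/2. For all sufficiently large d ∈ ℕ, the Hamming ball H_k(𝟙) ⊆ 𝔽₂^d is δ-nonrecurrent, where 𝟙 = (1,…,1). -/
/-- `S ⊆ Γ` is `δ`-nonrecurrent in the finite abelian group `Γ`: there is `A ⊆ Γ`
with `|A| > δ|Γ|` and `(A - A) ∩ S = ∅`. -/
def GroupNonrecurrent {Γ : Type*} [AddCommGroup Γ] [Fintype Γ] (δ : ℝ) (S : Set Γ) : Prop :=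
  ∃ A : Set Γ, δ * (Fintype.card Γ : ℝ) < (A.ncard : ℝ) ∧ ∀ a ∈ A, ∀ b ∈ A, a - b ∉ S

/-- The Hamming ball of radius `k` around `y` in `𝔽₂^d`:
all `x` differing from `y` in at most `k` coordinates. -/
def hammingBall (d k : ℕ) (y : Fin d → ZMod 2) : Set (Fin d → ZMod 2) :=
  {x | hammingDist y x ≤ k}

/-! Take `A` to be the vectors of weight at most `m = ⌊(d - k - 1) / 2⌋`. A difference of two
elements of `A` has weight at most `2m < d - k`, so it is at distance more than `k` from `𝟙`.
Adding `𝟙` maps `A` onto the vectors of weight at least `d - m`, so `A` covers half of the cube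
apart from the at most `k + 1` middle layers. Each layer has at most `C(d, ⌊d/2⌋) = O(2^d / √d)`
elements, hence `|A| ≥ (1/2 - o(1)) 2^d`. -/

open Finset Filter Topology

namespace Nat

theorem two_mul_add_one_mul_centralBinom_sq_le (n : ℕ) :
    (2 * n + 1) * centralBinom n ^ 2 ≤ 16 ^ n := by
  induction n with
  | zero => simp
  | succ n ih =>
    refine le_of_mul_le_mul_left ?_ (by positivity : 0 < (n + 1) ^ 2)
    calc (n + 1) ^ 2 * ((2 * (n + 1) + 1) * centralBinom (n + 1) ^ 2)
        = (2 * n + 3) * ((n + 1) * centralBinom (n + 1)) ^ 2 := by ring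
      _ = (2 * n + 3) * (2 * n + 1) * 4 * ((2 * n + 1) * centralBinom n ^ 2) := by
        rw [succ_mul_centralBinom_succ]; ring
      _ ≤ (n + 1) ^ 2 * 16 * 16 ^ n := Nat.mul_le_mul (by nlinarith) ih
      _ = (n + 1) ^ 2 * 16 ^ (n + 1) := by ring

theorem tendsto_centralBinom_div_four_pow :
    Tendsto (fun n ↦ (centralBinom n : ℝ) / 4 ^ n) atTop (𝓝 0) := by
  have hsqrt :=
    (Real.continuous_sqrt.tendsto 0).comp (tendsto_one_div_add_atTop_nhds_zero_nat (𝕜 := ℝ))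
  rw [Real.sqrt_zero] at hsqrt
  refine squeeze_zero (fun n ↦ by positivity) (fun n ↦ Real.le_sqrt_of_sq_le ?_) hsqrt
  have h : ((n : ℝ) + 1) * centralBinom n ^ 2 ≤ 16 ^ n := by
    have := two_mul_add_one_mul_centralBinom_sq_le n
    calc ((n : ℝ) + 1) * centralBinom n ^ 2 ≤ (2 * n + 1) * centralBinom n ^ 2 := by
          gcongr; linarith [n.cast_nonneg (α := ℝ)]
      _ ≤ 16 ^ n := by exact_mod_cast this
  have h16 : ((4 : ℝ) ^ n) ^ 2 = 16 ^ n := by rw [← pow_mul, mul_comm, pow_mul]; norm_num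
  rw [div_pow, div_le_div_iff₀ (by positivity) (by positivity), h16]
  linarith

theorem tendsto_choose_half_div_two_pow :
    Tendsto (fun d ↦ (d.choose (d / 2) : ℝ) / 2 ^ d) atTop (𝓝 0) := by
  have hhalf : Tendsto (fun d : ℕ ↦ (d + 1) / 2) atTop atTop :=
    tendsto_atTop_atTop.2 fun b ↦ ⟨2 * b, fun d hd ↦ by omega⟩
  have := (tendsto_centralBinom_div_four_pow.comp hhalf).const_mul 2
  rw [mul_zero] at this
  refine squeeze_zero (fun d ↦ by positivity) (fun d ↦ ?_) this
  set n := (d + 1) / 2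
  have hchoose : d.choose (d / 2) ≤ centralBinom n :=
    (choose_le_choose _ (by omega)).trans (choose_le_centralBinom _ n)
  have hpow : (4 : ℝ) ^ n ≤ 2 * 2 ^ d :=
    calc (4 : ℝ) ^ n = 2 ^ (2 * n) := by rw [pow_mul]; norm_num
      _ ≤ 2 ^ (d + 1) := pow_le_pow_right₀ (by norm_num) (by omega)
      _ = 2 * 2 ^ d := by ring
  simp only [Function.comp]
  rw [div_le_iff₀ (by positivity)]
  calc (d.choose (d / 2) : ℝ) ≤ centralBinom n := by exact_mod_cast hchoose
    _ = 2 * (centralBinom n / 4 ^ n) * (4 ^ n / 2) := by field_simp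
    _ ≤ 2 * (centralBinom n / 4 ^ n) * 2 ^ d := by gcongr; linarith

end Nat

theorem hammingNorm_sub_le {ι : Type*} [Fintype ι] {β : ι → Type*} [∀ i, AddCommGroup (β i)]
    [∀ i, DecidableEq (β i)] (x y : ∀ i, β i) :
    hammingNorm (x - y) ≤ hammingNorm x + hammingNorm y := by
  have := hammingDist_triangle y 0 x
  rw [hammingDist_zero_right, hammingDist_zero_left, hammingDist_eq_hammingNorm,
    neg_add_eq_sub] at this
  omega

section ZModTwo

variable {ι : Type*} [Fintype ι]

theorem hammingNorm_add_one (x : ι → ZMod 2) :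
    hammingNorm (x + 1) = Fintype.card ι - hammingNorm x := by
  have hflip : ∀ a : ZMod 2, a + 1 ≠ 0 ↔ ¬a ≠ 0 := by decide
  have hsplit := card_filter_add_card_filter_not (s := univ) fun i ↦ x i ≠ 0
  simp only [hammingNorm, Pi.add_apply, Pi.one_apply, hflip, card_univ] at hsplit ⊢
  omega

theorem hammingDist_one_left (x : ι → ZMod 2) :
    hammingDist 1 x = Fintype.card ι - hammingNorm x := by
  have hneg : -1 + x = x + 1 := by
    ext i
    have : ∀ a : ZMod 2, -1 + a = a + 1 := by decide
    exact this (x i)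
  rw [hammingDist_eq_hammingNorm, hneg, hammingNorm_add_one]

variable [DecidableEq ι]

theorem card_filter_hammingNorm_eq_le_choose (j : ℕ) :
    #{x : ι → ZMod 2 | hammingNorm x = j} ≤ (Fintype.card ι).choose j := by
  have hne : ∀ a b : ZMod 2, (a ≠ 0 ↔ b ≠ 0) → a = b := by decide
  rw [← card_univ, ← card_powersetCard]
  refine card_le_card_of_injOn (fun x ↦ ({i | x i ≠ 0} : Finset ι)) (fun x hx ↦ ?_)
    fun x _ y _ hxy ↦ ?_
  · simpa [hammingNorm] using hx
  · ext i
    exact hne _ _ (by simpa using congrArg (i ∈ ·) hxy)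

theorem two_pow_card_le_two_mul_card_add_card (m : ℕ) :
    2 ^ Fintype.card ι ≤ 2 * #{x : ι → ZMod 2 | hammingNorm x ≤ m}
      + #{x : ι → ZMod 2 | m < hammingNorm x ∧ hammingNorm x + m < Fintype.card ι} := by
  set A := ({x | hammingNorm x ≤ m} : Finset (ι → ZMod 2))
  set C := ({x | m < hammingNorm x ∧ hammingNorm x + m < Fintype.card ι} : Finset (ι → ZMod 2))
  have hcover : univ ⊆ A ∪ A.image (· + 1) ∪ C := by
    intro x _
    have hx := hammingNorm_add_one x
    have hinv : x + 1 + 1 = x := by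
      ext i
      have : ∀ a : ZMod 2, a + 1 + 1 = a := by decide
      exact this (x i)
    simp only [A, C, mem_union, mem_image, mem_filter, mem_univ, true_and]
    by_cases hxm : hammingNorm x ≤ m
    · exact .inl (.inl hxm)
    by_cases hxd : hammingNorm x + m < Fintype.card ι
    · exact .inr ⟨by omega, hxd⟩
    · exact .inl (.inr ⟨x + 1, by omega, hinv⟩)
  calc 2 ^ Fintype.card ι = #(univ : Finset (ι → ZMod 2)) := by simp
    _ ≤ #(A ∪ A.image (· + 1) ∪ C) := card_le_card hcover
    _ ≤ #A + #A + #C := by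
      grw [card_union_le, card_union_le, card_image_le]
    _ = 2 * #A + #C := by ring

theorem card_filter_hammingNorm_middle_le (m : ℕ) :
    #{x : ι → ZMod 2 | m < hammingNorm x ∧ hammingNorm x + m < Fintype.card ι}
      ≤ (Fintype.card ι).choose (Fintype.card ι / 2) * (Fintype.card ι - 2 * m - 1) := by
  calc _ ≤ (Fintype.card ι).choose (Fintype.card ι / 2) * #(Ioo m (Fintype.card ι - m)) :=
        card_le_mul_card_image_of_maps_to (f := hammingNorm) (fun x hx ↦ ?_) _ fun j _ ↦ ?_
    _ = _ := by rw [Nat.card_Ioo]; congr 1; omega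
  · simp only [mem_filter, mem_univ, true_and] at hx
    simp only [mem_Ioo]
    omega
  · calc #{x ∈ _ | hammingNorm x = j} ≤ #{x : ι → ZMod 2 | hammingNorm x = j} :=
          card_le_card (monotone_filter_left _ (subset_univ _))
      _ ≤ (Fintype.card ι).choose j := card_filter_hammingNorm_eq_le_choose j
      _ ≤ _ := Nat.choose_le_middle j _

end ZModTwo

theorem groupNonrecurrent_hammingBall {d k : ℕ} {δ : ℝ} (hkd : k < d)
    (hsmall : (k + 1) * ((d.choose (d / 2) : ℝ) / 2 ^ d) < 1 - 2 * δ) :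
    GroupNonrecurrent δ (hammingBall d k (fun _ ↦ 1)) := by
  set m := (d - k - 1) / 2
  refine ⟨{x | hammingNorm x ≤ m}, ?_, fun a ha b hb hab ↦ ?_⟩
  · have hcover := two_pow_card_le_two_mul_card_add_card (ι := Fin d) m
    have hmiddle := card_filter_hammingNorm_middle_le (ι := Fin d) m
    rw [Fintype.card_fin] at hcover hmiddle
    have hwidth : d - 2 * m - 1 ≤ k + 1 := by omega
    have hcount : (2 : ℝ) ^ d ≤ 2 * #{x : Fin d → ZMod 2 | hammingNorm x ≤ m}
        + d.choose (d / 2) * (k + 1) := by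
      have := hcover.trans (Nat.add_le_add_left (hmiddle.trans (Nat.mul_le_mul_left _ hwidth)) _)
      exact_mod_cast this
    rw [Set.ncard_eq_toFinset_card', Set.toFinset_ofPred, Fintype.card_fun, ZMod.card,
      Fintype.card_fin, Nat.cast_pow, Nat.cast_ofNat]
    rw [mul_div_assoc', div_lt_iff₀ (by positivity)] at hsmall
    linarith
  · have hnorm := hammingNorm_sub_le a b
    simp only [hammingBall, Set.mem_ofPred_eq] at ha hb hab
    rw [show (fun _ ↦ 1 : Fin d → ZMod 2) = 1 from rfl, hammingDist_one_left,
      Fintype.card_fin] at hab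
    omega

/-- For every `k ∈ ℕ` and `δ < 1/2`, for all sufficiently large `d` the Hamming ball
`H_k(𝟙) ⊆ 𝔽₂^d` is `δ`-nonrecurrent. -/
theorem hammingBall_nonrecurrent (k : ℕ) (δ : ℝ) (hδ : δ < 1 / 2) :
    ∃ d₀ : ℕ, ∀ d ≥ d₀, GroupNonrecurrent δ (hammingBall d k (fun _ => 1)) := by
  have hlim := Nat.tendsto_choose_half_div_two_pow.const_mul ((k : ℝ) + 1)
  rw [mul_zero] at hlim
  have hsmall := hlim.eventually_lt_const (by linarith : (0 : ℝ) < 1 - 2 * δ)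
  obtain ⟨d₀, hd₀⟩ := eventually_atTop.mp (hsmall.and (eventually_gt_atTop k))
  exact ⟨d₀, fun d hd ↦ groupNonrecurrent_hammingBall (hd₀ d hd).2 (hd₀ d hd).1⟩
end

section
/- Let δ > 0. If S ⊆ ℤ is finite and δ-nonrecurrent, then for all sufficiently large m ∈ ℕ there exists a set B ⊆ [m] such that (B,m) witnesses the δ-nonrecurrence of S. -/
open Pointwise

/-- The upper asymptotic density of a set of integers:
`limsup_{N→∞} |A ∩ {1,…,N}| / N`. -/
noncomputable def upperDensity (A : Set ℤ) : ℝ :=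
  Filter.limsup (fun N : ℕ => ((A ∩ Set.Icc (1 : ℤ) (N : ℤ)).ncard : ℝ) / N) Filter.atTop

/-- `S ⊆ ℤ` is `δ`-nonrecurrent: there is `A ⊆ ℤ` with `d̄(A) > δ` and
`(A - A) ∩ S = ∅`. -/
def IntNonrecurrent (δ : ℝ) (S : Set ℤ) : Prop :=
  ∃ A : Set ℤ, δ < upperDensity A ∧ ∀ a ∈ A, ∀ b ∈ A, a - b ∉ S

/-- `(B, m)` witnesses the `δ`-nonrecurrence of `S`: `B ⊆ [m] = {0,…,m-1}`,
`|B| > δ m`, `B ∩ (B + S) = ∅`, `B + S ⊆ [m]`, and `B + S + S ⊆ [m]`. -/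
def Witnesses (δ : ℝ) (S B : Set ℤ) (m : ℕ) : Prop :=
  B ⊆ Set.Ico (0 : ℤ) (m : ℤ) ∧ δ * (m : ℝ) < (B.ncard : ℝ) ∧
    B ∩ (B + S) = ∅ ∧ B + S ⊆ Set.Ico (0 : ℤ) (m : ℤ) ∧
    B + S + S ⊆ Set.Ico (0 : ℤ) (m : ℤ)

/-! If every block of `L` consecutive integers met `A` in at most `αL` points, then covering
`[1, N]` by `⌊N/L⌋ + 1` blocks would give `|A ∩ [1, N]| ≤ αN + αL`, contradicting `d̄(A) > α` for
large `N`. So with `δ < α < d̄(A)`, `|s| ≤ K` on `S` and `m = L + 4K`, some block of length `L`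
holds more than `αL ≥ δm` points of `A` once `L` is large. Translating it into `[2K, 2K + L)`
gives `B`: differences are preserved, and the margins of width `2K` absorb `B + S + S`. -/

open Filter Set

lemma frequently_mul_lt_ncard_of_lt_upperDensity {A : Set ℤ} {β : ℝ} (h : β < upperDensity A) :
    ∃ᶠ N : ℕ in atTop, β * N < (A ∩ Icc 1 (N : ℤ)).ncard := by
  have hfreq := frequently_lt_of_lt_limsup
    (isCoboundedUnder_le_of_le atTop fun N : ℕ => by positivity) h
  refine (hfreq.and_eventually (eventually_gt_atTop 0)).mono fun N ⟨hN, hN0⟩ => ?_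
  exact (lt_div_iff₀ (by exact_mod_cast hN0)).mp hN

lemma ncard_inter_Ico_le_of_forall_ncard_le {A : Set ℤ} {L : ℕ} {c : ℝ}
    (h : ∀ a : ℤ, ((A ∩ Ico a (a + L)).ncard : ℝ) ≤ c) (a : ℤ) (k : ℕ) :
    ((A ∩ Ico a (a + k * L)).ncard : ℝ) ≤ k * c := by
  induction k with
  | zero => simp
  | succ k ih =>
    have hsplit : A ∩ Ico a (a + (k + 1 : ℕ) * L) =
        (A ∩ Ico a (a + k * L)) ∪ (A ∩ Ico (a + k * L) (a + k * L + L)) := by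
      rw [← inter_union_distrib_left,
        Ico_union_Ico_eq_Ico (le_add_of_nonneg_right (by positivity)) (by linarith)]
      push_cast; ring_nf
    calc ((A ∩ Ico a (a + (k + 1 : ℕ) * L)).ncard : ℝ)
        ≤ (A ∩ Ico a (a + k * L)).ncard + (A ∩ Ico (a + k * L) (a + k * L + L)).ncard := by
          rw [hsplit]; exact_mod_cast ncard_union_le _ _
      _ ≤ k * c + c := add_le_add ih (h _)
      _ = (k + 1 : ℕ) * c := by push_cast; ring

theorem exists_dense_block {A : Set ℤ} {α : ℝ} (hA : α < upperDensity A) {L : ℕ} (hL : 0 < L) :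
    ∃ a : ℤ, α * L < (A ∩ Ico a (a + L)).ncard := by
  by_contra! hsparse
  have hLpos : (0 : ℝ) < L := by exact_mod_cast hL
  have hα : 0 ≤ α := nonneg_of_mul_nonneg_left ((Nat.cast_nonneg _).trans (hsparse 0)) hLpos
  obtain ⟨β, hαβ, hβ⟩ := exists_between hA
  obtain ⟨N, hN, hNlarge⟩ := ((frequently_mul_lt_ncard_of_lt_upperDensity hβ).and_eventually
    (tendsto_natCast_atTop_atTop.eventually_gt_atTop (α * L / (β - α)))).exists
  rw [div_lt_iff₀ (sub_pos.mpr hαβ)] at hNlarge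
  set q := N / L + 1
  have hqL : q * L = N / L * L + L := Nat.succ_mul _ _
  have hcover : A ∩ Icc 1 (N : ℤ) ⊆ A ∩ Ico 1 (1 + q * L) := by
    refine inter_subset_inter_right _ (Icc_subset_Ico_right ?_)
    have := Nat.lt_div_mul_add (a := N) hL
    omega
  have hq : (q : ℝ) * L ≤ N + L := by
    have := Nat.div_mul_le_self N L
    exact_mod_cast (by omega : q * L ≤ N + L)
  have hbound : ((A ∩ Icc 1 (N : ℤ)).ncard : ℝ) ≤ α * N + α * L :=
    calc ((A ∩ Icc 1 (N : ℤ)).ncard : ℝ)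
        ≤ q * (α * L) :=
          (Nat.cast_le.mpr (ncard_le_ncard hcover ((finite_Ico _ _).inter_of_right _))).trans
            (ncard_inter_Ico_le_of_forall_ncard_le hsparse 1 q)
      _ = α * (q * L) := by ring
      _ ≤ α * (N + L) := mul_le_mul_of_nonneg_left hq hα
      _ = α * N + α * L := by ring
  linarith

lemma add_subset_Ico_of_abs_le {α : Type*} [AddCommGroup α] [LinearOrder α] [IsOrderedAddMonoid α]
    {X S : Set α} {lo hi K : α} (hX : X ⊆ Ico lo hi) (hS : ∀ s ∈ S, |s| ≤ K) :
    X + S ⊆ Ico (lo - K) (hi + K) := by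
  rintro _ ⟨x, hx, s, hs, rfl⟩
  obtain ⟨hlo, hhi⟩ := hX hx
  obtain ⟨hKs, hsK⟩ := abs_le.mp (hS s hs)
  exact ⟨sub_eq_add_neg lo K ▸ add_le_add hlo hKs, add_lt_add_of_lt_of_le hhi hsK⟩

lemma inter_add_eq_empty_of_forall_sub_notMem {G : Type*} [AddCommGroup G] {B S : Set G}
    (h : ∀ a ∈ B, ∀ b ∈ B, a - b ∉ S) : B ∩ (B + S) = ∅ := by
  refine eq_empty_of_forall_notMem ?_
  rintro _ ⟨hx, b, hb, s, hs, rfl⟩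
  exact h _ hx b hb (by simpa using hs)

lemma forall_sub_notMem_image_add_const {G : Type*} [AddCommGroup G] {A S : Set G}
    (h : ∀ a ∈ A, ∀ b ∈ A, a - b ∉ S) (t : G) :
    ∀ a ∈ (· + t) '' A, ∀ b ∈ (· + t) '' A, a - b ∉ S := by
  rintro _ ⟨a, ha, rfl⟩ _ ⟨b, hb, rfl⟩
  simpa using h a ha b hb

lemma witnesses_of_subset_Ico {δ : ℝ} {S B : Set ℤ} {K L : ℕ} (hS : ∀ s ∈ S, |s| ≤ K)
    (hB : ∀ a ∈ B, ∀ b ∈ B, a - b ∉ S) (hBsub : B ⊆ Ico (2 * K) (2 * K + L))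
    (hcard : δ * (L + 4 * K : ℕ) < B.ncard) : Witnesses δ S B (L + 4 * K) := by
  have hBS := add_subset_Ico_of_abs_le hBsub hS
  have hBSS := add_subset_Ico_of_abs_le hBS hS
  refine ⟨hBsub.trans (Ico_subset_Ico ?_ ?_), hcard, inter_add_eq_empty_of_forall_sub_notMem hB,
    hBS.trans (Ico_subset_Ico ?_ ?_), hBSS.trans (Ico_subset_Ico ?_ ?_)⟩ <;> push_cast <;> omega

theorem eventually_exists_witness_general (δ : ℝ) (S : Set ℤ) (hS : S.Finite)
    (hnon : IntNonrecurrent δ S) :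
    ∀ᶠ m : ℕ in Filter.atTop, ∃ B : Set ℤ, Witnesses δ S B m := by
  obtain ⟨A, hδA, hA⟩ := hnon
  obtain ⟨K, hK⟩ : ∃ K : ℕ, ∀ s ∈ S, |s| ≤ K := by
    obtain ⟨K, hK⟩ := (hS.image Int.natAbs).bddAbove
    exact ⟨K, fun s hs => by rw [Int.abs_eq_natAbs]; exact_mod_cast hK ⟨s, hs, rfl⟩⟩
  obtain ⟨α, hδα, hαA⟩ := exists_between hδA
  have hlarge : ∀ᶠ L : ℕ in atTop, δ * (L + 4 * K : ℕ) ≤ α * L := by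
    filter_upwards [tendsto_natCast_atTop_atTop.eventually_ge_atTop (4 * K * δ / (α - δ))]
      with L hL
    rw [div_le_iff₀ (sub_pos.mpr hδα)] at hL
    push_cast
    linarith
  filter_upwards [eventually_gt_atTop (4 * K), (tendsto_sub_atTop_nat (4 * K)).eventually hlarge]
    with m hm hmL
  obtain ⟨a, ha⟩ := exists_dense_block hαA (Nat.sub_pos_of_lt hm)
  rw [← Nat.sub_add_cancel hm.le]
  refine ⟨(· + (2 * K - a)) '' (A ∩ Ico a (a + ↑(m - 4 * K))), witnesses_of_subset_Ico hK
    (forall_sub_notMem_image_add_const (fun x hx y hy => hA x hx.1 y hy.1) _) ?_ ?_⟩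
  · refine (image_mono inter_subset_right).trans_eq ?_
    rw [image_add_const_Ico]
    congr 1 <;> ring
  · rw [ncard_image_of_injective _ (add_left_injective _)]
    exact hmL.trans_lt ha

/-- If `S ⊆ ℤ` is finite and `δ`-nonrecurrent (with `δ > 0`), then for all
sufficiently large `m` there is `B ⊆ [m]` such that `(B, m)` witnesses the
`δ`-nonrecurrence of `S`. -/
theorem eventually_exists_witness (δ : ℝ) (hδ : 0 < δ) (S : Set ℤ) (hS : S.Finite)
    (hnon : IntNonrecurrent δ S) :
    ∀ᶠ m : ℕ in Filter.atTop, ∃ B : Set ℤ, Witnesses δ S B m :=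
  eventually_exists_witness_general δ S hS hnon
end

section
/- Let k, m ∈ ℕ. If S ⊆ ℤ is k-chromatically recurrent, then so is mS := {mn : n ∈ S}. -/
/-- `S ⊆ ℤ` is `k`-chromatically recurrent: for every partition of `ℤ` into `k` sets
(equivalently, every coloring `f : ℤ → Fin k`), some cell `A_j` satisfies
`(A_j - A_j) ∩ S ≠ ∅`. -/
def KChromaticallyRecurrent (k : ℕ) (S : Set ℤ) : Prop :=
  ∀ f : ℤ → Fin k, ∃ a b : ℤ, f a = f b ∧ a - b ∈ S

/-- If `S ⊆ ℤ` is `k`-chromatically recurrent, then so is `mS = {mn : n ∈ S}`. -/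
theorem dilate_chromatically_recurrent (k m : ℕ) (S : Set ℤ)
    (h : KChromaticallyRecurrent k S) :
    KChromaticallyRecurrent k ((fun n => (m : ℤ) * n) '' S) := by
  intro f
  obtain ⟨a, b, hab, hS⟩ := h (fun n => f ((m : ℤ) * n))
  exact ⟨(m : ℤ) * a, (m : ℤ) * b, hab, ⟨a - b, hS, by ring⟩⟩
end

section
/- Let δ, η ∈ (0,1/2), and let E, F be finite nonempty sets of positive integers which are δ-nonrecurrent and η-nonrecurrent respectively. If (A,m) witnesses the δ-nonrecurrence of E, then for all sufficiently large l ∈ ℕ there exists C ⊆ [lm] with A ⊆ C such that (C, lm) witnesses the 2δη-nonrecurrence of E ∪ mF, where mF := {mn : n ∈ F}. Consequently, for all sufficiently large m, the set E ∪ mF is 2δη-nonrecurrent. -/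
open Pointwise

lemma unify {m x x' b b' : ℤ} (hm : 0 < m) (hx : 0 ≤ x) (hx2 : x < m)
    (hx' : 0 ≤ x') (hx'2 : x' < m) (h : x + m * b = x' + m * b') : x = x' ∧ b = b' := by
  have hd : m ∣ (x - x') := ⟨b' - b, by linarith [mul_sub m b' b]⟩
  have h0 : x - x' = 0 := Int.eq_zero_of_abs_lt_dvd hd (by rw [abs_lt]; constructor <;> linarith)
  have hxx : x = x' := by linarith
  refine ⟨hxx, ?_⟩
  have : m * b = m * b' := by linarith
  exact mul_left_cancel₀ (ne_of_gt hm) this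

set_option maxHeartbeats 1000000 in
lemma exists_block (F : Set ℤ) (fs : ℕ) (hfs : 1 ≤ fs) (hF : F ⊆ Set.Icc 1 (fs : ℤ))
    (η : ℝ) (hη0 : 0 < η) (hFnon : IntNonrecurrent η F) (c : ℕ) :
    ∀ᶠ l : ℕ in Filter.atTop, ∃ Bf : Finset ℤ,
      (0:ℤ) ∈ Bf ∧ (∀ b ∈ Bf, 0 ≤ b ∧ b ≤ (l : ℤ) - (c:ℤ)) ∧
      (∀ b ∈ Bf, ∀ b' ∈ Bf, b - b' ∉ F) ∧ η * l ≤ (Bf.card : ℝ) := by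
  obtain ⟨D, hDd, hDdiff⟩ := hFnon
  set η'' : ℝ := (η + upperDensity D) / 2 with hη''def
  have hη''1 : η < η'' := by rw [hη''def]; linarith
  have hη''2 : η'' < upperDensity D := by rw [hη''def]; linarith
  set η₁ : ℝ := (η + η'') / 2 with hη₁def
  have hη₁1 : η < η₁ := by rw [hη₁def]; linarith
  have hη₁2 : η₁ < η'' := by rw [hη₁def]; linarith
  have hη₁0 : 0 < η₁ := lt_trans hη0 hη₁1
  have hcob : Filter.atTop.IsCoboundedUnder (· ≤ ·)
      (fun N : ℕ => ((D ∩ Set.Icc (1 : ℤ) (N : ℤ)).ncard : ℝ) / N) :=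
    Filter.isCoboundedUnder_le_of_le Filter.atTop (x := 0) (fun N => by positivity)
  have hfreq : ∃ᶠ N : ℕ in Filter.atTop,
      η'' < ((D ∩ Set.Icc (1 : ℤ) (N : ℤ)).ncard : ℝ) / N :=
    Filter.frequently_lt_of_lt_limsup hcob hη''2
  obtain ⟨N₀, hgN₀, hN₀ge⟩ := (hfreq.and_eventually (Filter.eventually_ge_atTop
      (max 1 ⌈2 * η₁ * (fs : ℝ) / (η'' - η)⌉₊))).exists
  have hN₀1 : 1 ≤ N₀ := le_trans (le_max_left _ _) hN₀ge
  have hN₀0R : (0:ℝ) < (N₀ : ℝ) := by exact_mod_cast hN₀1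
  have hN₀big : 2 * η₁ * (fs : ℝ) / (η'' - η) ≤ (N₀ : ℝ) := by
    refine le_trans (Nat.le_ceil _) ?_
    exact_mod_cast le_trans (le_max_right _ _) hN₀ge
  set B0s := D ∩ Set.Icc (1:ℤ) (N₀:ℤ) with hB0s
  have hB0fin : B0s.Finite := (Set.finite_Icc _ _).subset Set.inter_subset_right
  set B0 := hB0fin.toFinset with hB0def
  have hB0mem : ∀ x : ℤ, x ∈ B0 ↔ (x ∈ D ∧ 1 ≤ x ∧ x ≤ (N₀:ℤ)) := by
    intro x
    rw [hB0def, Set.Finite.mem_toFinset, hB0s]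
    simp [Set.mem_Icc, and_assoc]
  have hcard0 : η'' * (N₀ : ℝ) < (B0.card : ℝ) := by
    have hnc : B0s.ncard = B0.card := Set.ncard_eq_toFinset_card _ hB0fin
    have := (lt_div_iff₀ hN₀0R).mp hgN₀
    rw [hnc] at this
    linarith
  have hB0ne : B0.Nonempty := by
    rw [← Finset.card_pos]
    rcases Nat.eq_zero_or_pos B0.card with h | h
    · exfalso; rw [h] at hcard0; norm_num at hcard0; nlinarith
    · exact h
  set μ := B0.min' hB0ne with hμdef
  have hμmem : μ ∈ B0 := B0.min'_mem _
  have hμ1 : 1 ≤ μ := ((hB0mem μ).mp hμmem).2.1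
  have hμN₀ : μ ≤ (N₀:ℤ) := ((hB0mem μ).mp hμmem).2.2
  set P : ℕ := N₀ + fs with hPdef
  have hP0 : 0 < P := by omega
  have hPz : (0:ℤ) < (P:ℤ) := by exact_mod_cast hP0
  have hev2 : ∀ᶠ l : ℕ in Filter.atTop, η₁ * ((c:ℝ) + (P:ℝ)) ≤ (η₁ - η) * l := by
    filter_upwards [Filter.eventually_ge_atTop ⌈η₁ * ((c:ℝ) + (P:ℝ)) / (η₁ - η)⌉₊] with l hl
    have h1 : η₁ * ((c:ℝ) + (P:ℝ)) / (η₁ - η) ≤ (l:ℝ) :=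
      le_trans (Nat.le_ceil _) (by exact_mod_cast hl)
    have h2 : (0:ℝ) < η₁ - η := by linarith
    calc η₁ * ((c:ℝ) + (P:ℝ)) = (η₁ * ((c:ℝ) + (P:ℝ)) / (η₁ - η)) * (η₁ - η) := by
          field_simp
      _ ≤ (l:ℝ) * (η₁ - η) := mul_le_mul_of_nonneg_right h1 (le_of_lt h2)
      _ = (η₁ - η) * l := by ring
  filter_upwards [hev2, Filter.eventually_ge_atTop (c + P + 1)] with l hlcount hlsize
  set k : ℕ := (l - c) / P with hkdef
  have hkP : k * P ≤ l - c := by rw [hkdef]; exact Nat.div_mul_le_self _ _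
  have hkP2 : l - c < k * P + P := by
    rw [hkdef]; exact Nat.lt_div_mul_add hP0
  have hk1 : 1 ≤ k := by
    rw [hkdef, Nat.le_div_iff_mul_le hP0]; omega
  have hcl : c ≤ l := by omega
  have hkPz : (k:ℤ) * (P:ℤ) ≤ (l:ℤ) - (c:ℤ) := by
    have h := hkP; zify [hcl] at h; exact h
  have hkPz2 : (l:ℤ) - (c:ℤ) < (k:ℤ) * (P:ℤ) + (P:ℤ) := by
    have h := hkP2; zify [hcl] at h; exact h
  have hPfs : (P:ℤ) = (N₀:ℤ) + (fs:ℤ) := by rw [hPdef]; push_cast; ring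
  have hPR : (P:ℝ) = (N₀:ℝ) + (fs:ℝ) := by rw [hPdef]; push_cast; ring
  have hfsz : (1:ℤ) ≤ (fs:ℤ) := by exact_mod_cast hfs
  have hee : η'' - η₁ = (η'' - η) / 2 := by rw [hη₁def]; ring
  have hμle : ∀ y ∈ B0, μ ≤ y := fun y hy => B0.min'_le y hy
  -- the block
  set Bf : Finset ℤ := ((Finset.range k) ×ˢ B0).image
      (fun p : ℕ × ℤ => (p.1 : ℤ) * (P:ℤ) + (p.2 - μ)) with hBfdef
  have hBfmem : ∀ x : ℤ, x ∈ Bf ↔ ∃ i : ℕ, i < k ∧ ∃ y ∈ B0, x = (i:ℤ) * (P:ℤ) + (y - μ) := by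
    intro x
    rw [hBfdef, Finset.mem_image]
    constructor
    · rintro ⟨⟨i, y⟩, hp, rfl⟩
      obtain ⟨hi, hy⟩ := Finset.mem_product.mp hp
      exact ⟨i, Finset.mem_range.mp hi, y, hy, rfl⟩
    · rintro ⟨i, hi, y, hy, rfl⟩
      exact ⟨(i, y), Finset.mem_product.mpr ⟨Finset.mem_range.mpr hi, hy⟩, rfl⟩
  clear_value Bf k P μ B0 B0s η₁ η''
  refine ⟨Bf, ?_, ?_, ?_, ?_⟩
  · exact (hBfmem 0).mpr ⟨0, hk1, μ, hμmem, by ring⟩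
  · intro b hb
    obtain ⟨i, hi, y, hy, rfl⟩ := (hBfmem b).mp hb
    obtain ⟨hyD, hy1, hyN₀⟩ := (hB0mem y).mp hy
    have hμy : μ ≤ y := hμle y hy
    have hμy : μ ≤ y := hμle y hy
    have hiz : (i:ℤ) + 1 ≤ (k:ℤ) := by exact_mod_cast hi
    have hik : (i:ℤ) * (P:ℤ) + (P:ℤ) ≤ (k:ℤ) * (P:ℤ) := by nlinarith
    have hi0 : (0:ℤ) ≤ (i:ℤ) := Int.ofNat_nonneg i
    constructor
    · nlinarith
    · nlinarith
  · intro b hb b' hb' hmemF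
    obtain ⟨i, hi, y, hy, rfl⟩ := (hBfmem b).mp hb
    obtain ⟨i', hi', y', hy', rfl⟩ := (hBfmem b').mp hb'
    obtain ⟨hyD, hy1, hyN₀⟩ := (hB0mem y).mp hy
    obtain ⟨hy'D, hy'1, hy'N₀⟩ := (hB0mem y').mp hy'
    obtain ⟨hge1, hlefs⟩ := hF hmemF
    rcases lt_trichotomy i i' with hii | hii | hii
    · have : (i:ℤ) + 1 ≤ (i':ℤ) := by exact_mod_cast hii
      have h2 : (i:ℤ) * (P:ℤ) + (P:ℤ) ≤ (i':ℤ) * (P:ℤ) := by nlinarith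
      omega
    · subst hii
      have : ((i:ℤ) * (P:ℤ) + (y - μ)) - ((i:ℤ) * (P:ℤ) + (y' - μ)) = y - y' := by ring
      rw [this] at hmemF
      exact hDdiff y hyD y' hy'D hmemF
    · have : (i':ℤ) + 1 ≤ (i:ℤ) := by exact_mod_cast hii
      have h2 : (i':ℤ) * (P:ℤ) + (P:ℤ) ≤ (i:ℤ) * (P:ℤ) := by nlinarith
      omega
  · have hinj : Set.InjOn (fun p : ℕ × ℤ => (p.1 : ℤ) * (P:ℤ) + (p.2 - μ))
        ↑((Finset.range k) ×ˢ B0) := by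
      rintro ⟨i, y⟩ hp ⟨i', y'⟩ hp' heq
      simp only [Finset.coe_product, Set.mem_prod, Finset.mem_coe, Finset.mem_range,
        Finset.coe_range, Set.mem_Iio] at hp hp'
      obtain ⟨hi, hy⟩ := hp
      obtain ⟨hi', hy'⟩ := hp'
      obtain ⟨hyD, hy1, hyN₀⟩ := (hB0mem y).mp hy
      obtain ⟨hy'D, hy'1, hy'N₀⟩ := (hB0mem y').mp hy'
      have hμy : μ ≤ y := hμle y hy
      have hμy' : μ ≤ y' := hμle y' hy'
      have heq' : (y - μ) + (P:ℤ) * (i:ℤ) = (y' - μ) + (P:ℤ) * (i':ℤ) := by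
        simp only at heq; linarith
      obtain ⟨e1, e2⟩ := unify hPz (by omega) (by omega) (by omega) (by omega) heq'
      have : i = i' := by exact_mod_cast e2
      subst this
      have : y = y' := by omega
      subst this
      rfl
    have hcard : Bf.card = k * B0.card := by
      rw [hBfdef, Finset.card_image_of_injOn hinj, Finset.card_product, Finset.card_range]
    rw [hcard]
    -- real arithmetic
    have hc1 : (l:ℝ) - (c:ℝ) < (k:ℝ) * (P:ℝ) + (P:ℝ) := by
      exact_mod_cast hkPz2
    have hstep1 : η * l ≤ η₁ * ((l:ℝ) - (c:ℝ) - (P:ℝ)) := by nlinarith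
    have hstep2 : η₁ * ((l:ℝ) - (c:ℝ) - (P:ℝ)) ≤ η₁ * ((k:ℝ) * (P:ℝ)) := by nlinarith
    have hstep3 : η₁ * (P:ℝ) ≤ η'' * (N₀:ℝ) := by
      have h2 : (0:ℝ) < η'' - η := by linarith
      have : 2 * η₁ * (fs:ℝ) ≤ (N₀:ℝ) * (η'' - η) := by
        rw [div_le_iff₀ h2] at hN₀big; linarith
      nlinarith [hPR]
    have hk0 : (0:ℝ) ≤ (k:ℝ) := by positivity
    have hstep4 : η₁ * ((k:ℝ) * (P:ℝ)) ≤ (k:ℝ) * ((B0.card : ℝ)) := by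
      have := mul_le_mul_of_nonneg_left hstep3 hk0
      nlinarith
    have : ((k * B0.card : ℕ) : ℝ) = (k:ℝ) * (B0.card : ℝ) := by push_cast; ring
    rw [this]
    linarith

set_option maxHeartbeats 1600000 in
lemma build_witness (δ η : ℝ) (hδ0 : 0 < δ) (hη0 : 0 < η)
    (E F : Set ℤ) (fs : ℕ) (hfs : 1 ≤ fs) (hF : F ⊆ Set.Icc 1 (fs : ℤ)) (hFne : F.Nonempty)
    (hEne : E.Nonempty) (hEpos : ∀ n ∈ E, 0 < n)
    (hFnon : IntNonrecurrent η F)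
    (A : Set ℤ) (m : ℕ) (hA : Witnesses δ E A m) :
    ∀ᶠ l : ℕ in Filter.atTop, ∃ C : Set ℤ, A ⊆ C ∧
      Witnesses (2 * δ * η) (E ∪ (fun n => (m : ℤ) * n) '' F) C (l * m) := by
  obtain ⟨hAsub, hAcard, hAdisj, hAE, hAEE⟩ := hA
  have hm1 : 1 ≤ m := by
    by_contra h
    push_neg at h
    interval_cases m
    · have hAemp : A = ∅ := Set.subset_empty_iff.mp (by simpa using hAsub)
      rw [hAemp] at hAcard
      simp [Set.ncard_empty] at hAcard
  have hmz : (0:ℤ) < (m:ℤ) := by exact_mod_cast hm1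
  have hmR : (0:ℝ) < (m:ℝ) := by exact_mod_cast hm1
  have hAfin : A.Finite := (Set.finite_Ico _ _).subset hAsub
  have hAne : A.Nonempty := by
    rcases Set.eq_empty_or_nonempty A with h | h
    · exfalso
      rw [h] at hAcard
      simp [Set.ncard_empty] at hAcard
      nlinarith
    · exact h
  obtain ⟨e₀, he₀⟩ := hEne
  obtain ⟨f₀, hf₀⟩ := hFne
  have hf₀1 : (1:ℤ) ≤ f₀ := (hF hf₀).1
  have hf₀fs : f₀ ≤ (fs:ℤ) := (hF hf₀).2
  have hfsz : (1:ℤ) ≤ (fs:ℤ) := by exact_mod_cast hfs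
  have hfsR : (1:ℝ) ≤ (fs:ℝ) := by exact_mod_cast hfs
  have hAmem : ∀ a ∈ A, 0 ≤ a ∧ a < (m:ℤ) := fun a ha => ⟨(hAsub ha).1, (hAsub ha).2⟩
  have hAEmem : ∀ a ∈ A, ∀ e ∈ E, 0 ≤ a + e ∧ a + e < (m:ℤ) := by
    intro a ha e he
    have h := hAE (Set.add_mem_add ha he)
    exact ⟨h.1, h.2⟩
  have hAEEmem : ∀ a ∈ A, ∀ e ∈ E, ∀ e' ∈ E, 0 ≤ a + e + e' ∧ a + e + e' < (m:ℤ) := by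
    intro a ha e he e' he'
    have h := hAEE (Set.add_mem_add (Set.add_mem_add ha he) he')
    exact ⟨h.1, h.2⟩
  have hnotAE : ∀ a ∈ A, ∀ a' ∈ A, ∀ e ∈ E, a ≠ a' + e := by
    intro a ha a' ha' e he hEq
    have hmem : a ∈ A ∩ (A + E) := ⟨ha, ⟨a', ha', e, he, hEq.symm⟩⟩
    rw [hAdisj] at hmem
    exact hmem
  have hEbd : ∀ e ∈ E, 1 ≤ e ∧ e ≤ (m:ℤ) - 1 := by
    intro e he
    obtain ⟨a, ha⟩ := hAne
    have h1 := (hAEmem a ha e he).2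
    have h2 := (hAmem a ha).1
    exact ⟨hEpos e he, by linarith⟩
  have he₀bd := hEbd e₀ he₀
  filter_upwards [exists_block F fs hfs hF η hη0 hFnon (3*fs+3), Filter.eventually_ge_atTop 1]
    with l hBlock hl1
  obtain ⟨Bf, hB0, hBbd', hBdiff, hBcard⟩ := hBlock
  have hBbd : ∀ b ∈ Bf, 0 ≤ b ∧ b ≤ (l:ℤ) - 3*(fs:ℤ) - 3 := by
    intro b hb
    obtain ⟨h1, h2⟩ := hBbd' b hb
    refine ⟨h1, ?_⟩
    push_cast at h2
    linarith
  set Af := hAfin.toFinset with hAfdef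
  have hAfmem : ∀ a : ℤ, a ∈ Af ↔ a ∈ A := fun a => Set.Finite.mem_toFinset hAfin
  have hAfcard : (Af.card : ℝ) = (A.ncard : ℝ) := by
    rw [Set.ncard_eq_toFinset_card A hAfin]
  set C1 := (Af ×ˢ Bf).image (fun p : ℤ × ℤ => p.1 + (m:ℤ) * p.2) with hC1def
  set C2 := (Af ×ˢ Bf).image (fun p : ℤ × ℤ => p.1 + e₀ + (m:ℤ) * (p.2 + f₀)) with hC2def
  set Cf := C1 ∪ C2 with hCfdef
  have hCmem : ∀ x : ℤ, x ∈ Cf ↔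
      ((∃ a ∈ A, ∃ b ∈ Bf, x = a + (m:ℤ) * b) ∨
       (∃ a ∈ A, ∃ b ∈ Bf, x = a + e₀ + (m:ℤ) * (b + f₀))) := by
    intro x
    rw [hCfdef, Finset.mem_union, hC1def, hC2def, Finset.mem_image, Finset.mem_image]
    constructor
    · rintro (⟨⟨a,b⟩, hp, rfl⟩ | ⟨⟨a,b⟩, hp, rfl⟩)
      · obtain ⟨ha, hb⟩ := Finset.mem_product.mp hp
        exact Or.inl ⟨a, (hAfmem a).mp ha, b, hb, rfl⟩
      · obtain ⟨ha, hb⟩ := Finset.mem_product.mp hp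
        exact Or.inr ⟨a, (hAfmem a).mp ha, b, hb, rfl⟩
    · rintro (⟨a, ha, b, hb, rfl⟩ | ⟨a, ha, b, hb, rfl⟩)
      · exact Or.inl ⟨(a,b), Finset.mem_product.mpr ⟨(hAfmem a).mpr ha, hb⟩, rfl⟩
      · exact Or.inr ⟨(a,b), Finset.mem_product.mpr ⟨(hAfmem a).mpr ha, hb⟩, rfl⟩
  have hinj1 : Set.InjOn (fun p : ℤ × ℤ => p.1 + (m:ℤ) * p.2) ↑(Af ×ˢ Bf) := by
    rintro ⟨a, b⟩ hp ⟨a', b'⟩ hp' heq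
    rw [Finset.mem_coe, Finset.mem_product] at hp hp'
    have ha := hAmem a ((hAfmem a).mp hp.1)
    have ha' := hAmem a' ((hAfmem a').mp hp'.1)
    simp only at heq
    obtain ⟨e1, e2⟩ := unify hmz ha.1 ha.2 ha'.1 ha'.2 heq
    simp only [Prod.mk.injEq]
    exact ⟨e1, e2⟩
  have hinj2 : Set.InjOn (fun p : ℤ × ℤ => p.1 + e₀ + (m:ℤ) * (p.2 + f₀)) ↑(Af ×ˢ Bf) := by
    rintro ⟨a, b⟩ hp ⟨a', b'⟩ hp' heq
    rw [Finset.mem_coe, Finset.mem_product] at hp hp'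
    have ha := hAEmem a ((hAfmem a).mp hp.1) e₀ he₀
    have ha' := hAEmem a' ((hAfmem a').mp hp'.1) e₀ he₀
    simp only at heq
    have heq' : (a + e₀) + (m:ℤ) * (b + f₀) = (a' + e₀) + (m:ℤ) * (b' + f₀) := by linarith
    obtain ⟨e1, e2⟩ := unify hmz ha.1 ha.2 ha'.1 ha'.2 heq'
    simp only [Prod.mk.injEq]
    constructor <;> linarith
  have hdisj12 : Disjoint C1 C2 := by
    rw [Finset.disjoint_left]
    rintro x hx1 hx2
    rw [hC1def, Finset.mem_image] at hx1
    rw [hC2def, Finset.mem_image] at hx2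
    obtain ⟨⟨a,b⟩, hp, hpe⟩ := hx1
    obtain ⟨⟨a',b'⟩, hp', hpe'⟩ := hx2
    rw [Finset.mem_product] at hp hp'
    have ha := hAmem a ((hAfmem a).mp hp.1)
    have ha' := hAEmem a' ((hAfmem a').mp hp'.1) e₀ he₀
    simp only at hpe hpe'
    have heq : a + (m:ℤ) * b = (a' + e₀) + (m:ℤ) * (b' + f₀) := by
      rw [hpe, ← hpe']
    obtain ⟨e1, e2⟩ := unify hmz ha.1 ha.2 ha'.1 ha'.2 heq
    exact hnotAE a ((hAfmem a).mp hp.1) a' ((hAfmem a').mp hp'.1) e₀ he₀ e1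
  have hCfcard : Cf.card = Af.card * Bf.card + Af.card * Bf.card := by
    rw [hCfdef, Finset.card_union_of_disjoint hdisj12, hC1def, hC2def,
      Finset.card_image_of_injOn hinj1, Finset.card_image_of_injOn hinj2, Finset.card_product]
  have hCbd : ∀ x ∈ Cf, 0 ≤ x ∧ x ≤ (m:ℤ)*(l:ℤ) - 2*(fs:ℤ)*(m:ℤ) - (m:ℤ) - 2 := by
    intro x hx
    rcases (hCmem x).mp hx with ⟨a, ha, b, hb, rfl⟩ | ⟨a, ha, b, hb, rfl⟩
    · have h1 := hAmem a ha
      have h2 := hBbd b hb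
      have hmb : (m:ℤ) * b ≤ (m:ℤ) * ((l:ℤ) - 3*(fs:ℤ) - 3) :=
        mul_le_mul_of_nonneg_left h2.2 (le_of_lt hmz)
      have hmb0 : 0 ≤ (m:ℤ) * b := mul_nonneg (le_of_lt hmz) h2.1
      constructor
      · linarith
      · nlinarith
    · have h1 := hAEmem a ha e₀ he₀
      have h2 := hBbd b hb
      have hbf : b + f₀ ≤ (l:ℤ) - 2*(fs:ℤ) - 3 := by linarith
      have hbf0 : 0 ≤ b + f₀ := by linarith
      have hmb : (m:ℤ) * (b + f₀) ≤ (m:ℤ) * ((l:ℤ) - 2*(fs:ℤ) - 3) :=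
        mul_le_mul_of_nonneg_left hbf (le_of_lt hmz)
      have hmb0 : 0 ≤ (m:ℤ) * (b + f₀) := mul_nonneg (le_of_lt hmz) hbf0
      constructor
      · linarith
      · nlinarith
  set S := E ∪ (fun n => (m:ℤ) * n) '' F with hSdef
  have hSbd : ∀ s ∈ S, 1 ≤ s ∧ s ≤ (m:ℤ)*(fs:ℤ) := by
    intro s hs
    rcases hs with he | hf
    · have h := hEbd s he
      refine ⟨h.1, ?_⟩
      nlinarith [h.2]
    · obtain ⟨f, hfF, rfl⟩ := hf
      have hfb := hF hfF
      simp only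
      constructor
      · nlinarith [hfb.1]
      · nlinarith [hfb.2]
  have hfsm : (1:ℤ) ≤ (fs:ℤ)*(m:ℤ) := by nlinarith
  refine ⟨(Cf : Set ℤ), ?_, ?_, ?_, ?_, ?_, ?_⟩
  · intro a ha
    rw [Finset.mem_coe, hCmem]
    exact Or.inl ⟨a, ha, 0, hB0, by ring⟩
  · intro x hx
    have h := hCbd x (Finset.mem_coe.mp hx)
    rw [Set.mem_Ico]
    refine ⟨h.1, ?_⟩
    push_cast
    nlinarith [h.2]
  · rw [Set.ncard_coe_finset, hCfcard]
    have hlR : (1:ℝ) ≤ (l:ℝ) := by exact_mod_cast hl1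
    have hδA : δ * (m:ℝ) < (Af.card:ℝ) := by rw [hAfcard]; exact hAcard
    have h1 : (0:ℝ) < η * l := by nlinarith
    have hApos : (0:ℝ) < (Af.card:ℝ) := lt_trans (by positivity) hδA
    have h2 : δ*(m:ℝ)*(η*(l:ℝ)) < (Af.card:ℝ)*(η*(l:ℝ)) := mul_lt_mul_of_pos_right hδA h1
    have h3 : (Af.card:ℝ)*(η*(l:ℝ)) ≤ (Af.card:ℝ)*(Bf.card:ℝ) :=
      mul_le_mul_of_nonneg_left hBcard (le_of_lt hApos)
    have hgoal : 2*δ*η*(((l*m:ℕ)):ℝ) = 2*(δ*(m:ℝ)*(η*(l:ℝ))) := by push_cast; ring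
    rw [hgoal]
    push_cast
    linarith
  · rw [Set.eq_empty_iff_forall_notMem]
    rintro x ⟨hx1, hx2⟩
    obtain ⟨y, hy, s, hs, rfl⟩ := hx2
    rcases (hCmem _).mp (Finset.mem_coe.mp hx1) with ⟨a, ha, b, hb, hxe⟩ | ⟨a, ha, b, hb, hxe⟩
    · rcases (hCmem _).mp (Finset.mem_coe.mp hy) with ⟨a', ha', b', hb', hye⟩ |
          ⟨a', ha', b', hb', hye⟩
      · rcases hs with hse | ⟨f, hfF, hfe⟩
        · -- copy1 = copy1 + e
          have hr := hAEmem a' ha' s hse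
          have hr' := hAmem a ha
          have heq : (a' + s) + (m:ℤ) * b' = a + (m:ℤ) * b := by rw [← hxe, hye]; ring
          obtain ⟨e1, _⟩ := unify hmz hr.1 hr.2 hr'.1 hr'.2 heq
          exact hnotAE a ha a' ha' s hse e1.symm
        · -- copy1 = copy1 + mf
          simp only at hfe
          have hr := hAmem a' ha'
          have hr' := hAmem a ha
          have heq : a' + (m:ℤ) * (b' + f) = a + (m:ℤ) * b := by rw [← hxe, hye, ← hfe]; ring
          obtain ⟨e1, e2⟩ := unify hmz hr.1 hr.2 hr'.1 hr'.2 heq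
          have : b - b' = f := by linarith
          exact hBdiff b hb b' hb' (this ▸ hfF)
      · rcases hs with hse | ⟨f, hfF, hfe⟩
        · -- copy1 = copy2 + e
          have hr := hAEEmem a' ha' e₀ he₀ s hse
          have hr' := hAmem a ha
          have heq : (a' + e₀ + s) + (m:ℤ) * (b' + f₀) = a + (m:ℤ) * b := by
            rw [← hxe, hye]; ring
          obtain ⟨_, e2⟩ := unify hmz hr.1 hr.2 hr'.1 hr'.2 heq
          have : b - b' = f₀ := by linarith
          exact hBdiff b hb b' hb' (this ▸ hf₀)
        · -- copy1 = copy2 + mf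
          simp only at hfe
          have hr := hAEmem a' ha' e₀ he₀
          have hr' := hAmem a ha
          have heq : (a' + e₀) + (m:ℤ) * (b' + f₀ + f) = a + (m:ℤ) * b := by
            rw [← hxe, hye, ← hfe]; ring
          obtain ⟨e1, _⟩ := unify hmz hr.1 hr.2 hr'.1 hr'.2 heq
          exact hnotAE a ha a' ha' e₀ he₀ e1.symm
    · rcases (hCmem _).mp (Finset.mem_coe.mp hy) with ⟨a', ha', b', hb', hye⟩ |
          ⟨a', ha', b', hb', hye⟩
      · rcases hs with hse | ⟨f, hfF, hfe⟩
        · -- copy2 = copy1 + e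
          have hr := hAEmem a' ha' s hse
          have hr' := hAEmem a ha e₀ he₀
          have heq : (a' + s) + (m:ℤ) * b' = (a + e₀) + (m:ℤ) * (b + f₀) := by
            rw [← hxe, hye]; ring
          obtain ⟨_, e2⟩ := unify hmz hr.1 hr.2 hr'.1 hr'.2 heq
          have : b' - b = f₀ := by linarith
          exact hBdiff b' hb' b hb (this ▸ hf₀)
        · -- copy2 = copy1 + mf
          simp only at hfe
          have hr := hAmem a' ha'
          have hr' := hAEmem a ha e₀ he₀
          have heq : a' + (m:ℤ) * (b' + f) = (a + e₀) + (m:ℤ) * (b + f₀) := by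
            rw [← hxe, hye, ← hfe]; ring
          obtain ⟨e1, _⟩ := unify hmz hr.1 hr.2 hr'.1 hr'.2 heq
          exact hnotAE a' ha' a ha e₀ he₀ e1
      · rcases hs with hse | ⟨f, hfF, hfe⟩
        · -- copy2 = copy2 + e
          have hr := hAEEmem a' ha' e₀ he₀ s hse
          have hr' := hAEmem a ha e₀ he₀
          have heq : (a' + e₀ + s) + (m:ℤ) * (b' + f₀) = (a + e₀) + (m:ℤ) * (b + f₀) := by
            rw [← hxe, hye]; ring
          obtain ⟨e1, _⟩ := unify hmz hr.1 hr.2 hr'.1 hr'.2 heq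
          have : a = a' + s := by linarith
          exact hnotAE a ha a' ha' s hse this
        · -- copy2 = copy2 + mf
          simp only at hfe
          have hr := hAEmem a' ha' e₀ he₀
          have hr' := hAEmem a ha e₀ he₀
          have heq : (a' + e₀) + (m:ℤ) * (b' + f₀ + f) = (a + e₀) + (m:ℤ) * (b + f₀) := by
            rw [← hxe, hye, ← hfe]; ring
          obtain ⟨_, e2⟩ := unify hmz hr.1 hr.2 hr'.1 hr'.2 heq
          have : b - b' = f := by linarith
          exact hBdiff b hb b' hb' (this ▸ hfF)
  · rintro x ⟨y, hy, s, hs, hsum⟩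
    have hsum' : y + s = x := hsum
    have h1 := hCbd y (Finset.mem_coe.mp hy)
    have h2 := hSbd s hs
    rw [Set.mem_Ico]
    constructor
    · linarith [h1.1, h2.1]
    · push_cast
      nlinarith [h1.2, h2.2]
  · rintro x ⟨z, hz, s', hs', hsum⟩
    obtain ⟨y, hy, s, hs, hsum2⟩ := hz
    have hsum' : z + s' = x := hsum
    have hsum2' : y + s = z := hsum2
    have h1 := hCbd y (Finset.mem_coe.mp hy)
    have h2 := hSbd s hs
    have h3 := hSbd s' hs'
    rw [Set.mem_Ico]
    constructor
    · linarith [h1.1, h2.1, h3.1]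
    · push_cast
      nlinarith [h1.2, h2.2, h3.2]

set_option maxHeartbeats 800000 in
lemma scale_witness (δ : ℝ) (hδ0 : 0 < δ) (E A : Set ℤ) (m : ℕ) (hA : Witnesses δ E A m) :
    ∀ᶠ m' : ℕ in Filter.atTop, ∃ A' : Set ℤ, Witnesses δ E A' m' := by
  obtain ⟨hAsub, hAcard, hAdisj, hAE, hAEE⟩ := hA
  have hm1 : 1 ≤ m := by
    by_contra h
    push_neg at h
    interval_cases m
    · have hAemp : A = ∅ := Set.subset_empty_iff.mp (by simpa using hAsub)
      rw [hAemp] at hAcard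
      simp [Set.ncard_empty] at hAcard
  have hmz : (0:ℤ) < (m:ℤ) := by exact_mod_cast hm1
  have hmR : (0:ℝ) < (m:ℝ) := by exact_mod_cast hm1
  have hAfin : A.Finite := (Set.finite_Ico _ _).subset hAsub
  set Af := hAfin.toFinset with hAfdef
  have hAfmem : ∀ a : ℤ, a ∈ Af ↔ a ∈ A := fun a => Set.Finite.mem_toFinset hAfin
  have hAfcard : (Af.card : ℝ) = (A.ncard : ℝ) := by
    rw [Set.ncard_eq_toFinset_card A hAfin]
  have hAcard' : δ * (m:ℝ) < (Af.card : ℝ) := by rw [hAfcard]; exact hAcard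
  set θ : ℝ := (Af.card : ℝ) - δ * m with hθdef
  have hθ0 : 0 < θ := by rw [hθdef]; linarith
  have hAmem : ∀ a ∈ A, 0 ≤ a ∧ a < (m:ℤ) := fun a ha => ⟨(hAsub ha).1, (hAsub ha).2⟩
  have hAEmem : ∀ a ∈ A, ∀ e ∈ E, 0 ≤ a + e ∧ a + e < (m:ℤ) := by
    intro a ha e he
    have h := hAE (Set.add_mem_add ha he)
    exact ⟨h.1, h.2⟩
  have hAEEmem : ∀ a ∈ A, ∀ e ∈ E, ∀ e' ∈ E, 0 ≤ a + e + e' ∧ a + e + e' < (m:ℤ) := by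
    intro a ha e he e' he'
    have h := hAEE (Set.add_mem_add (Set.add_mem_add ha he) he')
    exact ⟨h.1, h.2⟩
  have hnotAE : ∀ a ∈ A, ∀ a' ∈ A, ∀ e ∈ E, a ≠ a' + e := by
    intro a ha a' ha' e he hEq
    have hmem : a ∈ A ∩ (A + E) := ⟨ha, ⟨a', ha', e, he, hEq.symm⟩⟩
    rw [hAdisj] at hmem
    exact hmem
  filter_upwards [Filter.eventually_ge_atTop (m * (⌈δ * (m:ℝ) / θ⌉₊ + 1))] with m' hm'
  set j : ℕ := m' / m with hjdef
  have hjX : ⌈δ * (m:ℝ) / θ⌉₊ + 1 ≤ j := by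
    rw [hjdef, Nat.le_div_iff_mul_le (by omega)]
    calc (⌈δ * (m:ℝ) / θ⌉₊ + 1) * m = m * (⌈δ * (m:ℝ) / θ⌉₊ + 1) := by ring
      _ ≤ m' := hm'
  have hj1 : 1 ≤ j := by omega
  have hjm : j * m ≤ m' := by rw [hjdef]; exact Nat.div_mul_le_self _ _
  have hjm2 : m' < j * m + m := by rw [hjdef]; exact Nat.lt_div_mul_add (by omega)
  have hjmz : (j:ℤ) * (m:ℤ) ≤ (m':ℤ) := by exact_mod_cast hjm
  have hjR : δ * (m:ℝ) / θ + 1 ≤ (j:ℝ) := by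
    calc δ * (m:ℝ) / θ + 1 ≤ (⌈δ * (m:ℝ) / θ⌉₊ : ℝ) + 1 := by
          linarith [Nat.le_ceil (δ * (m:ℝ) / θ)]
      _ ≤ (j:ℝ) := by exact_mod_cast hjX
  set A'f := (Af ×ˢ Finset.range j).image (fun p : ℤ × ℕ => p.1 + (m:ℤ) * (p.2 : ℤ)) with hA'def
  have hA'mem : ∀ x : ℤ, x ∈ A'f ↔ ∃ a ∈ A, ∃ i : ℕ, i < j ∧ x = a + (m:ℤ) * i := by
    intro x
    rw [hA'def, Finset.mem_image]
    constructor
    · rintro ⟨⟨a, i⟩, hp, rfl⟩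
      obtain ⟨ha, hi⟩ := Finset.mem_product.mp hp
      exact ⟨a, (hAfmem a).mp ha, i, Finset.mem_range.mp hi, rfl⟩
    · rintro ⟨a, ha, i, hi, rfl⟩
      exact ⟨(a, i), Finset.mem_product.mpr ⟨(hAfmem a).mpr ha, Finset.mem_range.mpr hi⟩, rfl⟩
  have hinj : Set.InjOn (fun p : ℤ × ℕ => p.1 + (m:ℤ) * (p.2 : ℤ)) ↑(Af ×ˢ Finset.range j) := by
    rintro ⟨a, i⟩ hp ⟨a', i'⟩ hp' heq
    rw [Finset.mem_coe, Finset.mem_product] at hp hp'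
    have ha := hAmem a ((hAfmem a).mp hp.1)
    have ha' := hAmem a' ((hAfmem a').mp hp'.1)
    simp only at heq
    obtain ⟨e1, e2⟩ := unify hmz ha.1 ha.2 ha'.1 ha'.2 heq
    have : i = i' := by exact_mod_cast e2
    simp only [Prod.mk.injEq]
    exact ⟨e1, this⟩
  have hA'card : A'f.card = Af.card * j := by
    rw [hA'def, Finset.card_image_of_injOn hinj, Finset.card_product, Finset.card_range]
  refine ⟨(A'f : Set ℤ), ?_, ?_, ?_, ?_, ?_⟩
  · intro x hx
    obtain ⟨a, ha, i, hi, rfl⟩ := (hA'mem x).mp (Finset.mem_coe.mp hx)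
    have h1 := hAmem a ha
    have hiz : (i:ℤ) + 1 ≤ (j:ℤ) := by exact_mod_cast hi
    have h2 : (m:ℤ) * ((i:ℤ) + 1) ≤ (m:ℤ) * (j:ℤ) := mul_le_mul_of_nonneg_left hiz (le_of_lt hmz)
    have h3 : 0 ≤ (m:ℤ) * (i:ℤ) := mul_nonneg (le_of_lt hmz) (Int.ofNat_nonneg i)
    rw [Set.mem_Ico]
    constructor
    · linarith
    · nlinarith
  · rw [Set.ncard_coe_finset, hA'card]
    have hm'R : (m':ℝ) < (j:ℝ) * m + m := by exact_mod_cast hjm2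
    have hjθ : δ * (m:ℝ) + θ ≤ (j:ℝ) * θ := by
      have := mul_le_mul_of_nonneg_right hjR (le_of_lt hθ0)
      rw [add_mul, div_mul_cancel₀ _ (ne_of_gt hθ0)] at this
      linarith
    have hδm' : δ * (m':ℝ) < δ * ((j:ℝ) * m + m) := by
      exact mul_lt_mul_of_pos_left hm'R hδ0
    have hkey : (Af.card : ℝ) = δ * m + θ := by rw [hθdef]; ring
    push_cast
    nlinarith
  · rw [Set.eq_empty_iff_forall_notMem]
    rintro x ⟨hx1, hx2⟩
    obtain ⟨y, hy, e, he, hsum⟩ := hx2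
    obtain ⟨a, ha, i, hi, hxe⟩ := (hA'mem x).mp (Finset.mem_coe.mp hx1)
    obtain ⟨a', ha', i', hi', hye⟩ := (hA'mem y).mp (Finset.mem_coe.mp hy)
    have hr := hAEmem a' ha' e he
    have hr' := hAmem a ha
    have heq : (a' + e) + (m:ℤ) * (i':ℤ) = a + (m:ℤ) * (i:ℤ) := by
      have hsum' : y + e = x := hsum
      rw [← hsum', hye] at hxe
      linarith
    obtain ⟨e1, _⟩ := unify hmz hr.1 hr.2 hr'.1 hr'.2 heq
    exact hnotAE a ha a' ha' e he e1.symm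
  · rintro x ⟨y, hy, e, he, hsum⟩
    have hsum' : y + e = x := hsum
    obtain ⟨a, ha, i, hi, hye⟩ := (hA'mem y).mp (Finset.mem_coe.mp hy)
    have hr := hAEmem a ha e he
    have hiz : (i:ℤ) + 1 ≤ (j:ℤ) := by exact_mod_cast hi
    have h2 : (m:ℤ) * ((i:ℤ) + 1) ≤ (m:ℤ) * (j:ℤ) := mul_le_mul_of_nonneg_left hiz (le_of_lt hmz)
    have h3 : 0 ≤ (m:ℤ) * (i:ℤ) := mul_nonneg (le_of_lt hmz) (Int.ofNat_nonneg i)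
    rw [Set.mem_Ico]
    constructor
    · linarith [hr.1]
    · nlinarith [hr.2]
  · rintro x ⟨z, hz, e', he', hsum⟩
    obtain ⟨y, hy, e, he, hsum2⟩ := hz
    have hsum' : z + e' = x := hsum
    have hsum2' : y + e = z := hsum2
    obtain ⟨a, ha, i, hi, hye⟩ := (hA'mem y).mp (Finset.mem_coe.mp hy)
    have hr := hAEEmem a ha e he e' he'
    have hiz : (i:ℤ) + 1 ≤ (j:ℤ) := by exact_mod_cast hi
    have h2 : (m:ℤ) * ((i:ℤ) + 1) ≤ (m:ℤ) * (j:ℤ) := mul_le_mul_of_nonneg_left hiz (le_of_lt hmz)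
    have h3 : 0 ≤ (m:ℤ) * (i:ℤ) := mul_nonneg (le_of_lt hmz) (Int.ofNat_nonneg i)
    rw [Set.mem_Ico]
    constructor
    · linarith [hr.1]
    · nlinarith [hr.2]

set_option maxHeartbeats 800000 in
lemma nonrec_of_witness (γ : ℝ) (hγ : 0 < γ) (S C : Set ℤ) (M : ℕ) (hM : 1 ≤ M)
    (h : Witnesses γ S C M) : IntNonrecurrent γ S := by
  obtain ⟨hCsub, hCcard, hCdisj, hCS, _⟩ := h
  have hMz : (0:ℤ) < (M:ℤ) := by exact_mod_cast hM
  have hMR : (0:ℝ) < (M:ℝ) := by exact_mod_cast hM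
  have hCfin : C.Finite := (Set.finite_Ico _ _).subset hCsub
  set Cf := hCfin.toFinset with hCfdef
  have hCfmem : ∀ x : ℤ, x ∈ Cf ↔ x ∈ C := fun x => Set.Finite.mem_toFinset hCfin
  have hCfcard : (Cf.card : ℝ) = (C.ncard : ℝ) := by
    rw [Set.ncard_eq_toFinset_card C hCfin]
  have hCmem : ∀ c ∈ C, 0 ≤ c ∧ c < (M:ℤ) := fun c hc => ⟨(hCsub hc).1, (hCsub hc).2⟩
  set q : ℝ := (C.ncard : ℝ) / M with hqdef
  have hγq : γ < q := by
    rw [hqdef]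
    rw [lt_div_iff₀ hMR]
    exact hCcard
  set AA : Set ℤ := {x : ℤ | ∃ c ∈ C, ∃ k : ℤ, x = c + k * M} with hAAdef
  have hq0 : 0 < q := lt_trans hγ hγq
  refine ⟨AA, ?_, ?_⟩
  · -- density
    have hbdd : Filter.IsBoundedUnder (· ≤ ·) Filter.atTop
        (fun N : ℕ => ((AA ∩ Set.Icc (1 : ℤ) (N : ℤ)).ncard : ℝ) / N) := by
      refine Filter.isBoundedUnder_of ⟨1, fun N => ?_⟩
      have hle : (AA ∩ Set.Icc (1 : ℤ) (N : ℤ)).ncard ≤ (Set.Icc (1 : ℤ) (N : ℤ)).ncard :=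
        Set.ncard_le_ncard Set.inter_subset_right (Set.finite_Icc _ _)
      have hIcc : (Set.Icc (1 : ℤ) (N : ℤ)).ncard = N := by
        rw [← Finset.coe_Icc, Set.ncard_coe_finset, Int.card_Icc]
        omega
      rw [hIcc] at hle
      have h1 : ((AA ∩ Set.Icc (1 : ℤ) (N : ℤ)).ncard : ℝ) ≤ (N:ℝ) := by exact_mod_cast hle
      exact div_le_one_of_le₀ h1 (by positivity)
    have hkey : ∀ᶠ N : ℕ in Filter.atTop,
        (γ + q)/2 ≤ ((AA ∩ Set.Icc (1 : ℤ) (N : ℤ)).ncard : ℝ) / N := by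
      filter_upwards [Filter.eventually_ge_atTop (max M ⌈4*(C.ncard:ℝ)/(q - γ)⌉₊),
        Filter.eventually_ge_atTop 1] with N hNbig hN1
      have hNM : M ≤ N := le_trans (le_max_left _ _) hNbig
      have hNbig2 : 4*(C.ncard:ℝ)/(q-γ) ≤ (N:ℝ) :=
        le_trans (Nat.le_ceil _) (by exact_mod_cast le_trans (le_max_right _ _) hNbig)
      have hNR : (0:ℝ) < (N:ℝ) := by exact_mod_cast hN1
      set K : ℕ := N / M with hKdef
      have hK1 : 1 ≤ K := by
        rw [hKdef, Nat.le_div_iff_mul_le (by omega)]; omega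
      have hKM : K * M ≤ N := by rw [hKdef]; exact Nat.div_mul_le_self _ _
      have hKM2 : N < K * M + M := by rw [hKdef]; exact Nat.lt_div_mul_add (by omega)
      set Gf := ((Finset.Icc (1:ℤ) ((K:ℤ)-1)) ×ˢ Cf).image
          (fun p : ℤ × ℤ => p.2 + p.1 * (M:ℤ)) with hGfdef
      have hGsub : ↑Gf ⊆ AA ∩ Set.Icc (1:ℤ) (N:ℤ) := by
        intro x hx
        rw [Finset.mem_coe, hGfdef, Finset.mem_image] at hx
        obtain ⟨⟨k, c⟩, hp, rfl⟩ := hx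
        obtain ⟨hk, hc⟩ := Finset.mem_product.mp hp
        rw [Finset.mem_Icc] at hk
        have hcC := (hCfmem c).mp hc
        have hcb := hCmem c hcC
        have hKMz : (K:ℤ) * (M:ℤ) ≤ (N:ℤ) := by exact_mod_cast hKM
        constructor
        · exact ⟨c, hcC, k, rfl⟩
        · rw [Set.mem_Icc]
          have hkM : k * (M:ℤ) ≤ ((K:ℤ)-1) * (M:ℤ) := mul_le_mul_of_nonneg_right hk.2 (le_of_lt hMz)
          have hkM1 : (M:ℤ) * 1 ≤ (M:ℤ) * k := mul_le_mul_of_nonneg_left hk.1 (le_of_lt hMz)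
          constructor
          · nlinarith [hcb.1]
          · nlinarith [hcb.2]
      have hGinj : Set.InjOn (fun p : ℤ × ℤ => p.2 + p.1 * (M:ℤ))
          ↑((Finset.Icc (1:ℤ) ((K:ℤ)-1)) ×ˢ Cf) := by
        rintro ⟨k, c⟩ hp ⟨k', c'⟩ hp' heq
        rw [Finset.mem_coe, Finset.mem_product] at hp hp'
        have hcb := hCmem _ ((hCfmem _).mp hp.2)
        have hcb' := hCmem _ ((hCfmem _).mp hp'.2)
        simp only at heq
        have heq' : c + (M:ℤ) * k = c' + (M:ℤ) * k' := by linarith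
        obtain ⟨e1, e2⟩ := unify hMz hcb.1 hcb.2 hcb'.1 hcb'.2 heq'
        simp only [Prod.mk.injEq]
        exact ⟨e2, e1⟩
      have hGcard : Gf.card = ((K:ℤ)-1).toNat * Cf.card := by
        rw [hGfdef, Finset.card_image_of_injOn hGinj, Finset.card_product, Int.card_Icc]
        congr 1
        omega
      have hle2 : ((((K:ℤ)-1).toNat * Cf.card : ℕ) : ℝ)
          ≤ ((AA ∩ Set.Icc (1:ℤ) (N:ℤ)).ncard : ℝ) := by
        rw [← hGcard]
        have h1 : Gf.card = (↑Gf : Set ℤ).ncard := (Set.ncard_coe_finset Gf).symm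
        have h2 : (↑Gf : Set ℤ).ncard ≤ (AA ∩ Set.Icc (1:ℤ) (N:ℤ)).ncard :=
          Set.ncard_le_ncard hGsub ((Set.finite_Icc _ _).subset Set.inter_subset_right)
        exact_mod_cast h1 ▸ h2
      have hKz : (1:ℤ) ≤ (K:ℤ) := by exact_mod_cast hK1
      have htn : ((((K:ℤ)-1).toNat : ℤ) : ℝ) = (K:ℝ) - 1 := by
        have h0 : (((K:ℤ)-1).toNat : ℤ) = (K:ℤ) - 1 := Int.toNat_of_nonneg (by omega)
        rw [h0]; push_cast; ring
      have hcard2 : ((K:ℝ) - 1) * (C.ncard : ℝ) ≤ ((AA ∩ Set.Icc (1:ℤ) (N:ℤ)).ncard : ℝ) := by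
        have := hle2
        push_cast at this
        rw [show ((((K:ℤ)-1).toNat : ℕ) : ℝ) = ((((K:ℤ)-1).toNat : ℤ) : ℝ) by push_cast; ring,
          htn] at this
        rw [show ((Cf.card : ℕ) : ℝ) = (C.ncard : ℝ) from hCfcard] at this
        exact this
      rw [le_div_iff₀ hNR]
      have hNMR : (N:ℝ) < (K:ℝ) * (M:ℝ) + (M:ℝ) := by exact_mod_cast hKM2
      have hq' : q * (M:ℝ) = (C.ncard:ℝ) := by
        rw [hqdef]; field_simp
      have e2 : 4 * ((C.ncard:ℝ)) ≤ (N:ℝ) * (q - γ) := by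
        rw [div_le_iff₀ (by linarith : (0:ℝ) < q - γ)] at hNbig2
        linarith
      have e1 : ((N:ℝ) - 2*(M:ℝ)) * q ≤ ((K:ℝ)-1) * (M:ℝ) * q := by
        have h1 : (N:ℝ) - 2*(M:ℝ) ≤ ((K:ℝ)-1) * (M:ℝ) := by nlinarith
        exact mul_le_mul_of_nonneg_right h1 (le_of_lt hq0)
      nlinarith [hcard2, e1, e2, hq', hMR, hq0, hγq]
    have hud : upperDensity AA = Filter.limsup
        (fun N : ℕ => ((AA ∩ Set.Icc (1 : ℤ) (N : ℤ)).ncard : ℝ) / N) Filter.atTop := rfl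
    have hlim := Filter.le_limsup_of_frequently_le hkey.frequently hbdd
    rw [hud]
    linarith
  · rintro x ⟨c, hc, k, rfl⟩ y ⟨c', hc', k', rfl⟩ hs
    set s := (c + k * M) - (c' + k' * M) with hsdef
    have h1 : c' + s ∈ Set.Ico (0:ℤ) (M:ℤ) := hCS ⟨c', hc', s, hs, rfl⟩
    have h2 := hCmem c hc
    have heq : c + (M:ℤ) * (k - k') = (c' + s) + (M:ℤ) * 0 := by rw [hsdef]; ring
    obtain ⟨hce, hke⟩ := unify hMz h2.1 h2.2 h1.1 h1.2 heq
    have : c ∈ C ∩ (C + S) := ⟨hc, ⟨c', hc', s, hs, hce.symm⟩⟩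
    rw [hCdisj] at this
    exact this

/-- Kriz's assembly lemma: if `E`, `F` are finite nonempty sets of positive integers
which are `δ`- and `η`-nonrecurrent and `(A, m)` witnesses the `δ`-nonrecurrence of
`E`, then for all large `l` there is `C ⊆ [lm]` containing `A` such that `(C, lm)`
witnesses the `2δη`-nonrecurrence of `E ∪ mF`; consequently, for all sufficiently
large `m'`, the set `E ∪ m'F` is `2δη`-nonrecurrent. -/
theorem assembly_lemma (δ η : ℝ) (hδ : δ ∈ Set.Ioo (0 : ℝ) (1 / 2))
    (hη : η ∈ Set.Ioo (0 : ℝ) (1 / 2)) (E F : Set ℤ)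
    (hEfin : E.Finite) (hFfin : F.Finite) (hEne : E.Nonempty) (hFne : F.Nonempty)
    (hEpos : ∀ n ∈ E, 0 < n) (hFpos : ∀ n ∈ F, 0 < n)
    (hEnon : IntNonrecurrent δ E) (hFnon : IntNonrecurrent η F)
    (A : Set ℤ) (m : ℕ) (hA : Witnesses δ E A m) :
    (∀ᶠ l : ℕ in Filter.atTop, ∃ C : Set ℤ, A ⊆ C ∧
      Witnesses (2 * δ * η) (E ∪ (fun n => (m : ℤ) * n) '' F) C (l * m)) ∧
    (∀ᶠ m' : ℕ in Filter.atTop,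
      IntNonrecurrent (2 * δ * η) (E ∪ (fun n => (m' : ℤ) * n) '' F)) := by
  obtain ⟨hδ0, hδ2⟩ := hδ
  obtain ⟨hη0, hη2⟩ := hη
  have hFfne : hFfin.toFinset.Nonempty := (Set.Finite.toFinset_nonempty hFfin).mpr hFne
  set fz : ℤ := hFfin.toFinset.max' hFfne with hfzdef
  have hfzF : fz ∈ F := (Set.Finite.mem_toFinset hFfin).mp (hFfin.toFinset.max'_mem hFfne)
  have hfz1 : (1:ℤ) ≤ fz := hFpos fz hfzF
  set fs : ℕ := fz.toNat with hfsdef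
  have hfscast : (fs:ℤ) = fz := Int.toNat_of_nonneg (by linarith)
  have hfs : 1 ≤ fs := by omega
  have hF : F ⊆ Set.Icc 1 (fs:ℤ) := by
    intro f hf
    rw [Set.mem_Icc, hfscast]
    exact ⟨hFpos f hf, hFfin.toFinset.le_max' f ((Set.Finite.mem_toFinset hFfin).mpr hf)⟩
  constructor
  · exact build_witness δ η hδ0 hη0 E F fs hfs hF hFne hEne hEpos hFnon A m hA
  · have hsc := scale_witness δ hδ0 E A m hA
    filter_upwards [hsc] with m' hm'
    obtain ⟨A', hA'⟩ := hm'
    have hm'1 : 1 ≤ m' := by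
      by_contra h
      push_neg at h
      interval_cases m'
      · obtain ⟨h1, h2, -, -, -⟩ := hA'
        have hemp : A' = ∅ := Set.subset_empty_iff.mp (by simpa using h1)
        rw [hemp] at h2
        simp [Set.ncard_empty] at h2
    have hbw := build_witness δ η hδ0 hη0 E F fs hfs hF hFne hEne hEpos hFnon A' m' hA'
    obtain ⟨l, hl⟩ := (hbw.and (Filter.eventually_ge_atTop 1)).exists
    obtain ⟨⟨C, hAC, hCwit⟩, hl1⟩ := hl
    exact nonrec_of_witness (2*δ*η) (by positivity) _ C (l * m')
      (Nat.one_le_iff_ne_zero.mpr (Nat.mul_ne_zero (by omega) (by omega))) hCwit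
end

section
/- Let δ < 1/2 and k ∈ ℕ. For all sufficiently large d ∈ ℕ there is an ε > 0 such that for all α ∈ 𝕋^d, the set H̃(α;k,ε) is a δ-nonrecurrent subset of ℤ. -/
open Pointwise

/-- The Hamming ball of radius `k` around `(1/2, …, 1/2)` inside the subgroup
`G_d = {0, 1/2}^d ⊆ 𝕋^d`: points of `G_d` with at most `k` coordinates
different from `1/2`. -/
def HkHalf (d k : ℕ) : Set (Fin d → UnitAddCircle) :=
  {x | (∀ j, x j = 0 ∨ x j = ((1 / 2 : ℝ) : UnitAddCircle)) ∧
    {j | x j ≠ ((1 / 2 : ℝ) : UnitAddCircle)}.ncard ≤ k}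

/-- The open box `V_ε = {x ∈ 𝕋^d : max_j ‖x_j‖ < ε}`. -/
def Veps (d : ℕ) (ε : ℝ) : Set (Fin d → UnitAddCircle) :=
  {x | ∀ j, ‖x j‖ < ε}

/-- The `ε`-copy of `H_k(𝟙)` determined by `α ∈ 𝕋^d`:
`H̃(α; k, ε) = {n ∈ ℤ : nα ∈ H_k((1/2,…,1/2)) + V_ε}`. -/
def Htilde (d : ℕ) (α : Fin d → UnitAddCircle) (k : ℕ) (ε : ℝ) : Set ℤ :=
  {n : ℤ | n • α ∈ HkHalf d k + Veps d ε}

/-!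
Cut the circle into `M = 2d²` cells and, for `c ∈ (ℤ/M)^d`, let `A_c` be the set of `n` such
that `(n α)_j` lies in the arc of `K = d² - 1` cells starting at `c_j` for at least
`T = ⌊d/2⌋ + k + 1` coordinates `j`. Two elements of `A_c` share more than `k` arcs, each shorter
than `1/2 - ε` for `ε = 1/(2M)`, so their difference cannot be within `ε` of a point with at most
`k` coordinates different from `1/2`. On average over `c`, an integer belongs to `A_c` with
probability at least `2^{-d} #{W ⊆ [d] : |W| ≥ T} · (2K/M)^d`, so some `A_c` has at least this
upper density; since the middle binomial coefficients are `O(2^d/√d)` and `(1 - 1/d²)^d → 1`,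
this tends to `1/2`.
-/

open Finset Filter Topology

lemma ncard_inter_Icc_eq_card_filter (A : Set ℤ) (N : ℕ) [DecidablePred (· ∈ A)] :
    (A ∩ Set.Icc (1 : ℤ) N).ncard = #{n ∈ Icc (1 : ℤ) N | n ∈ A} := by
  rw [← Set.ncard_coe_finset]
  congr 1
  ext n
  simp only [Set.mem_inter_iff, Set.mem_Icc, coe_filter, mem_Icc, Set.mem_ofPred_eq]
  tauto

lemma ncard_inter_Icc_le (A : Set ℤ) (N : ℕ) : (A ∩ Set.Icc (1 : ℤ) N).ncard ≤ N := by
  classical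
  rw [ncard_inter_Icc_eq_card_filter]
  exact (card_filter_le _ _).trans (by simp)

lemma le_upperDensity_of_frequently {A : Set ℤ} {r : ℝ}
    (h : ∃ᶠ N : ℕ in atTop, r * N ≤ (A ∩ Set.Icc (1 : ℤ) N).ncard) : r ≤ upperDensity A := by
  refine le_limsup_of_frequently_le ?_ ?_
  · refine (h.and_eventually (eventually_gt_atTop 0)).mono fun N ⟨hN, hpos⟩ => ?_
    rwa [le_div_iff₀ (by exact_mod_cast hpos)]
  · refine isBoundedUnder_of ⟨1, fun N => div_le_one_of_le₀ ?_ (Nat.cast_nonneg _)⟩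
    exact_mod_cast ncard_inter_Icc_le A N

open Classical in
theorem exists_le_upperDensity_of_le_card {ι : Type*} [Fintype ι] [Nonempty ι]
    (A : ι → Set ℤ) (G : ℕ) (hG : ∀ n, G ≤ #{i | n ∈ A i}) :
    ∃ i, (G : ℝ) / Fintype.card ι ≤ upperDensity (A i) := by
  have hN : ∀ N : ℕ, ∃ i, N * G ≤ Fintype.card ι * (A i ∩ Set.Icc (1 : ℤ) N).ncard := by
    intro N
    have hsum : ∑ _i : ι, N * G ≤ ∑ i, Fintype.card ι * (A i ∩ Set.Icc (1 : ℤ) N).ncard :=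
      calc ∑ _i : ι, N * G = Fintype.card ι * ∑ _n ∈ Icc (1 : ℤ) N, G := by simp
        _ ≤ Fintype.card ι * ∑ n ∈ Icc (1 : ℤ) N, #{i | n ∈ A i} := by
          gcongr with n; exact hG n
        _ = ∑ i, Fintype.card ι * (A i ∩ Set.Icc (1 : ℤ) N).ncard := by
          simp_rw [← mul_sum, ncard_inter_Icc_eq_card_filter, card_filter]
          rw [sum_comm]
    obtain ⟨i, -, hi⟩ := exists_le_of_sum_le univ_nonempty hsum
    exact ⟨i, hi⟩
  choose i hi using hN
  obtain ⟨i₀, hinf⟩ := Finite.exists_infinite_fiber i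
  refine ⟨i₀, le_upperDensity_of_frequently ?_⟩
  refine (Nat.frequently_atTop_iff_infinite.mpr (Set.infinite_coe_iff.mp hinf)).mono
    fun N (hN : i N = i₀) => ?_
  have hcard : (0 : ℝ) < Fintype.card ι := by exact_mod_cast Fintype.card_pos
  rw [div_mul_eq_mul_div, div_le_iff₀' hcard, ← hN, mul_comm]
  exact_mod_cast hi N

lemma half_sub_lt_norm_half_add {v : UnitAddCircle} {ε : ℝ} (hv : ‖v‖ < ε) :
    1 / 2 - ε < ‖((1 / 2 : ℝ) : UnitAddCircle) + v‖ := by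
  have hhalf : ‖((1 / 2 : ℝ) : UnitAddCircle)‖ = 1 / 2 := by
    simpa using AddCircle.norm_half_period_eq (1 : ℝ)
  have := norm_sub_norm_le ((1 / 2 : ℝ) : UnitAddCircle) (-v)
  rw [hhalf, norm_neg, sub_neg_eq_add] at this
  linarith

lemma card_le_of_mem_HkHalf_add_Veps {d k : ℕ} {ε : ℝ} {z : Fin d → UnitAddCircle}
    (hz : z ∈ HkHalf d k + Veps d ε) {s : Finset (Fin d)} (hs : ∀ j ∈ s, ‖z j‖ ≤ 1 / 2 - ε) :
    #s ≤ k := by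
  obtain ⟨x, ⟨-, hxk⟩, v, hv, rfl⟩ := hz
  have hsub : (s : Set (Fin d)) ⊆ {j | x j ≠ ((1 / 2 : ℝ) : UnitAddCircle)} := by
    intro j hj hxj
    have : ‖x j + v j‖ ≤ 1 / 2 - ε := hs j hj
    rw [hxj] at this
    linarith [half_sub_lt_norm_half_add (hv j)]
  rw [← Set.ncard_coe_finset]
  exact (Set.ncard_le_ncard hsub (Set.toFinite _)).trans hxk

lemma UnitAddCircle.norm_coe_le_abs_sub_intCast (x : ℝ) (m : ℤ) :
    ‖(x : UnitAddCircle)‖ ≤ |x - m| :=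
  UnitAddCircle.norm_eq.trans_le (round_le x m)

/-- The index of the cell `[i/M, (i+1)/M)` containing `θ`; the representative of `θ` only
shifts `⌊M x⌋` by a multiple of `M`. -/
noncomputable def cell (M : ℕ) (θ : UnitAddCircle) : ZMod M :=
  ⌊(M : ℝ) * Quotient.out θ⌋

section Cells

variable {M : ℕ} [NeZero M]

lemma norm_coe_sub_lt_of_val_sub_lt {K : ℕ} {x y : ℝ} {c : ZMod M}
    (hx : ((⌊(M : ℝ) * x⌋ : ZMod M) - c).val < K) (hy : ((⌊(M : ℝ) * y⌋ : ZMod M) - c).val < K) :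
    ‖((x - y : ℝ) : UnitAddCircle)‖ < K / M := by
  set r := ((⌊(M : ℝ) * x⌋ : ZMod M) - c).val
  set s := ((⌊(M : ℝ) * y⌋ : ZMod M) - c).val
  have hM : (0 : ℝ) < M := by exact_mod_cast Nat.pos_of_neZero M
  -- `⌊M x⌋ - r ≡ c ≡ ⌊M y⌋ - s (mod M)`, so `M (x - y)` is within `K` of a multiple of `M`.
  have hcong : ((⌊(M : ℝ) * x⌋ - r : ℤ) : ZMod M) = ((⌊(M : ℝ) * y⌋ - s : ℤ) : ZMod M) := by
    push_cast
    rw [ZMod.natCast_zmod_val, ZMod.natCast_zmod_val, sub_sub_cancel, sub_sub_cancel]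
  obtain ⟨m, hm⟩ := (ZMod.intCast_eq_intCast_iff_dvd_sub _ _ _).mp hcong
  have hmR : ((⌊(M : ℝ) * y⌋ - s - (⌊(M : ℝ) * x⌋ - r) : ℤ) : ℝ) = M * m := by
    exact_mod_cast hm
  push_cast at hmR
  have hx₁ := Int.floor_le ((M : ℝ) * x)
  have hx₂ := Int.lt_floor_add_one ((M : ℝ) * x)
  have hy₁ := Int.floor_le ((M : ℝ) * y)
  have hy₂ := Int.lt_floor_add_one ((M : ℝ) * y)
  have hr : (r : ℝ) + 1 ≤ K := by exact_mod_cast hx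
  have hs : (s : ℝ) + 1 ≤ K := by exact_mod_cast hy
  refine (UnitAddCircle.norm_coe_le_abs_sub_intCast _ (-m)).trans_lt ?_
  rw [lt_div_iff₀ hM, ← abs_of_pos hM, ← abs_mul, abs_lt]
  push_cast
  constructor <;> linarith

lemma norm_sub_lt_of_cell_sub_val_lt {K : ℕ} {θ φ : UnitAddCircle} {c : ZMod M}
    (hθ : (cell M θ - c).val < K) (hφ : (cell M φ - c).val < K) :
    ‖θ - φ‖ < K / M := by
  rw [← QuotientAddGroup.out_eq' θ, ← QuotientAddGroup.out_eq' φ, ← QuotientAddGroup.mk_sub]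
  exact norm_coe_sub_lt_of_val_sub_lt hθ hφ

lemma ZMod.card_filter_val_lt {K : ℕ} (hK : K ≤ M) : #{c : ZMod M | c.val < K} = K := by
  rw [← card_range K]
  refine card_nbij' ZMod.val (fun i => (i : ZMod M)) ?_ ?_ ?_ ?_
  · intro c hc
    simpa using hc
  · intro i hi
    simp_all [ZMod.val_natCast_of_lt ((mem_range.mp hi).trans_le hK)]
  · intro c _
    simp
  · intro i hi
    simp [ZMod.val_natCast_of_lt ((mem_range.mp hi).trans_le hK)]

lemma ZMod.card_filter_sub_val_lt (z : ZMod M) {K : ℕ} (hK : K ≤ M) :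
    #{c : ZMod M | (z - c).val < K} = K :=
  (card_equiv (Equiv.subLeft z) (by simp)).trans (ZMod.card_filter_val_lt hK)

end Cells

section Counting

variable {ι α : Type*} [Fintype ι] [DecidableEq ι] [Fintype α] [DecidableEq α]

lemma filter_mem_eq_iff_mem_piFinset (S : ι → Finset α) (W : Finset ι) (c : ι → α) :
    ({j | c j ∈ S j} : Finset ι) = W ↔
      c ∈ Fintype.piFinset fun j => if j ∈ W then S j else (S j)ᶜ := by
  simp only [Finset.ext_iff, mem_filter, mem_univ, true_and, Fintype.mem_piFinset]
  refine forall_congr' fun j => ?_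
  split_ifs with hj <;> simp [hj]

/-- Sorting the maps `c` by the set of coordinates where `c j ∈ S j`: each pattern `W` is
realised by at least `K ^ |ι|` maps. -/
theorem card_filter_le_card_mul_pow_le (S : ι → Finset α) {K : ℕ} (hS : ∀ j, K ≤ #(S j))
    (hSc : ∀ j, K ≤ #(S j)ᶜ) (T : ℕ) :
    #{W : Finset ι | T ≤ #W} * K ^ Fintype.card ι ≤ #{c : ι → α | T ≤ #{j | c j ∈ S j}} := by
  rw [card_eq_sum_card_fiberwise (f := fun c : ι → α => ({j | c j ∈ S j} : Finset ι))
    (t := {W | T ≤ #W})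
    (fun c hc => by simpa using hc), card_eq_sum_ones, sum_mul, one_mul]
  refine sum_le_sum fun W hW => ?_
  have hfiber : {c ∈ ({c | T ≤ #{j | c j ∈ S j}} : Finset (ι → α)) |
      ({j | c j ∈ S j} : Finset ι) = W} =
      Fintype.piFinset fun j => if j ∈ W then S j else (S j)ᶜ := by
    ext c
    rw [mem_filter, mem_filter, ← filter_mem_eq_iff_mem_piFinset]
    constructor
    · exact fun h => h.2
    · rintro h
      exact ⟨⟨mem_univ c, h ▸ (mem_filter.mp hW).2⟩, h⟩
  rw [hfiber, Fintype.card_piFinset, ← card_univ]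
  refine pow_card_le_prod _ _ _ fun j _ => ?_
  split_ifs
  exacts [hS j, hSc j]

end Counting

lemma Nat.centralBinom_sq_mul_le (n : ℕ) : n.centralBinom ^ 2 * (2 * n + 1) ≤ 16 ^ n := by
  induction n with
  | zero => simp
  | succ n ih =>
    have hrec := Nat.succ_mul_centralBinom_succ n
    have hpoly : (2 * n + 1) * (2 * n + 3) ≤ 4 * (n + 1) ^ 2 := by ring_nf; omega
    refine Nat.le_of_mul_le_mul_right ?_ (by positivity : 0 < (n + 1) ^ 2)
    calc (n + 1).centralBinom ^ 2 * (2 * (n + 1) + 1) * (n + 1) ^ 2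
        = ((n + 1) * (n + 1).centralBinom) ^ 2 * (2 * n + 3) := by ring
      _ = 4 * ((2 * n + 1) * (2 * n + 3)) * (n.centralBinom ^ 2 * (2 * n + 1)) := by
          rw [hrec]; ring
      _ ≤ 4 * (4 * (n + 1) ^ 2) * 16 ^ n := by gcongr
      _ = 16 ^ (n + 1) * (n + 1) ^ 2 := by ring

lemma Nat.choose_half_sq_mul_le (d : ℕ) : d.choose (d / 2) ^ 2 * (d + 1) ≤ 4 ^ d := by
  obtain ⟨m, rfl | rfl⟩ := Nat.even_or_odd' d
  · rw [Nat.mul_div_cancel_left m two_pos, ← Nat.centralBinom_eq_two_mul_choose, pow_mul]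
    exact Nat.centralBinom_sq_mul_le m
  · have hrec := Nat.add_one_mul_choose_eq (2 * m) m
    rw [Nat.choose_symm_half, ← Nat.centralBinom_eq_two_mul_choose] at hrec
    have hpoly : (2 * m + 1) * (2 * m + 2) ≤ 4 * (m + 1) ^ 2 := by ring_nf; omega
    rw [show (2 * m + 1) / 2 = m by omega]
    refine Nat.le_of_mul_le_mul_right ?_ (by positivity : 0 < (m + 1) ^ 2)
    calc (2 * m + 1).choose m ^ 2 * (2 * m + 1 + 1) * (m + 1) ^ 2
        = ((2 * m + 1).choose m * (m + 1)) ^ 2 * (2 * m + 2) := by ring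
      _ = (2 * m + 1) * (2 * m + 2) * (m.centralBinom ^ 2 * (2 * m + 1)) := by
          rw [← hrec]; ring
      _ ≤ 4 * (m + 1) ^ 2 * 16 ^ m := by gcongr; exact Nat.centralBinom_sq_mul_le m
      _ = 4 ^ (2 * m + 1) * (m + 1) ^ 2 := by
          rw [pow_succ 4, pow_mul]; ring

section Tail

variable (ι : Type*) [Fintype ι] [DecidableEq ι]

lemma card_filter_card_mem_Ico_le (a b : ℕ) :
    #{W : Finset ι | #W ∈ Ico a b} ≤ (b - a) * (Fintype.card ι).choose (Fintype.card ι / 2) := by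
  have hsub : ({W | #W ∈ Ico a b} : Finset (Finset ι)) ⊆
      (Ico a b).biUnion fun m => powersetCard m univ := by
    intro W hW
    simpa using hW
  calc _ ≤ #((Ico a b).biUnion fun m => powersetCard m univ) := card_le_card hsub
    _ ≤ ∑ m ∈ Ico a b, #(powersetCard m (univ : Finset ι)) := card_biUnion_le
    _ ≤ #(Ico a b) • (Fintype.card ι).choose (Fintype.card ι / 2) := by
        refine sum_le_card_nsmul _ _ _ fun m _ => ?_
        rw [card_powersetCard, card_univ]
        exact Nat.choose_le_middle m _
    _ = (b - a) * (Fintype.card ι).choose (Fintype.card ι / 2) := by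
        rw [Nat.card_Ico, smul_eq_mul]

/-- Complementation matches `#W < T` with `#W ≥ |ι| + 1 - T`, so the upper tail misses at most
the middle layers `#W ∈ [|ι| + 1 - T, T)` of half of all subsets. -/
theorem two_pow_card_le_two_mul_card_filter_le_card_add (T : ℕ) :
    2 ^ Fintype.card ι ≤ 2 * #{W : Finset ι | T ≤ #W} +
      (T - (Fintype.card ι + 1 - T)) * (Fintype.card ι).choose (Fintype.card ι / 2) := by
  set d := Fintype.card ι with hd
  have htotal : #{W : Finset ι | T ≤ #W} + #{W : Finset ι | ¬ T ≤ #W} = 2 ^ d := by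
    rw [card_filter_add_card_filter_not, card_univ, Fintype.card_finset]
  have hcompl : #{W : Finset ι | ¬ T ≤ #W} = #{W : Finset ι | d + 1 - T ≤ #W} := by
    refine card_nbij' compl compl (fun W hW => ?_) (fun W hW => ?_)
      (fun W _ => compl_compl W) (fun W _ => compl_compl W) <;>
    · have : #W ≤ d := card_le_univ W
      simp only [coe_filter, Set.mem_ofPred_eq, mem_univ, true_and, card_compl] at hW ⊢
      omega
  have hsplit : #{W : Finset ι | d + 1 - T ≤ #W} ≤
      #{W : Finset ι | T ≤ #W} + #{W : Finset ι | #W ∈ Ico (d + 1 - T) T} := by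
    refine (card_le_card fun W hW => ?_).trans (card_union_le _ _)
    simp only [mem_filter, mem_univ, true_and, mem_union, mem_Ico] at hW ⊢
    omega
  have hmid : #{W : Finset ι | #W ∈ Ico (d + 1 - T) T} ≤ (T - (d + 1 - T)) * d.choose (d / 2) :=
    card_filter_card_mem_Ico_le ι _ _
  omega

end Tail

/-- `(cell M θ - c).val < K` says that `θ` lies in the arc made of the `K` cells starting at
cell `c`. -/
def arcSet (M K T : ℕ) {d : ℕ} (α : Fin d → UnitAddCircle) (c : Fin d → ZMod M) : Set ℤ :=
  {n | T ≤ #{j | (cell M ((n • α) j) - c j).val < K}}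

section ArcSets

variable {d M K : ℕ} [NeZero M]

lemma sub_notMem_Htilde {T k : ℕ} {ε : ℝ} (hK : (K : ℝ) / M ≤ 1 / 2 - ε) (hT : d + k < 2 * T)
    (α : Fin d → UnitAddCircle) (c : Fin d → ZMod M) {a b : ℤ}
    (ha : a ∈ arcSet M K T α c) (hb : b ∈ arcSet M K T α c) : a - b ∉ Htilde d α k ε := by
  intro hab
  set Sa : Finset (Fin d) := {j | (cell M ((a • α) j) - c j).val < K}
  set Sb : Finset (Fin d) := {j | (cell M ((b • α) j) - c j).val < K}
  have hinter : k < #(Sa ∩ Sb) := by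
    have hunion : #(Sa ∪ Sb) ≤ d := (card_le_univ _).trans_eq (Fintype.card_fin d)
    have := card_inter_add_card_union Sa Sb
    have : T ≤ #Sa := ha
    have : T ≤ #Sb := hb
    omega
  refine hinter.not_ge (card_le_of_mem_HkHalf_add_Veps hab fun j hj => ?_)
  rw [mem_inter, mem_filter, mem_filter] at hj
  rw [sub_smul, Pi.sub_apply]
  exact (norm_sub_lt_of_cell_sub_val_lt hj.1.2 hj.2.2).le.trans hK

open Classical in
lemma card_filter_card_mul_pow_le_card_mem_arcSet (hKM : 2 * K ≤ M) (T : ℕ)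
    (α : Fin d → UnitAddCircle) (n : ℤ) :
    #{W : Finset (Fin d) | T ≤ #W} * K ^ d ≤ #{c : Fin d → ZMod M | n ∈ arcSet M K T α c} := by
  have h := card_filter_le_card_mul_pow_le
    (fun j => ({c : ZMod M | (cell M ((n • α) j) - c).val < K} : Finset (ZMod M)))
    (fun j => (ZMod.card_filter_sub_val_lt _ (by omega)).ge)
    (fun j => by rw [card_compl, ZMod.card, ZMod.card_filter_sub_val_lt _ (by omega)]; omega) T
  simpa [arcSet] using h

theorem exists_le_upperDensity_arcSet (hKM : 2 * K ≤ M) (T : ℕ) (α : Fin d → UnitAddCircle) :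
    ∃ c : Fin d → ZMod M,
      (#{W : Finset (Fin d) | T ≤ #W} : ℝ) * ((K : ℝ) / M) ^ d ≤
        upperDensity (arcSet M K T α c) := by
  classical
  obtain ⟨c, hc⟩ := exists_le_upperDensity_of_le_card (fun c => arcSet M K T α c) _
    (card_filter_card_mul_pow_le_card_mem_arcSet hKM T α)
  refine ⟨c, le_of_eq_of_le ?_ hc⟩
  simp [div_pow, mul_div_assoc]

end ArcSets

lemma half_sub_le_card_filter_div_two_pow (d k : ℕ) :
    1 / 2 - (k + 1) / √(d + 1) ≤ (#{W : Finset (Fin d) | d / 2 + k + 1 ≤ #W} : ℝ) / 2 ^ d := by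
  set P := #{W : Finset (Fin d) | d / 2 + k + 1 ≤ #W}
  set C := d.choose (d / 2)
  have htail : (2 : ℝ) ^ d ≤ 2 * P + (2 * k + 2) * C := by
    have h := two_pow_card_le_two_mul_card_filter_le_card_add (Fin d) (d / 2 + k + 1)
    rw [Fintype.card_fin] at h
    have hmid : d / 2 + k + 1 - (d + 1 - (d / 2 + k + 1)) ≤ 2 * k + 2 := by omega
    exact_mod_cast h.trans (by gcongr)
  have hsqrt : 0 < √((d : ℝ) + 1) := Real.sqrt_pos.mpr (by positivity)
  have hC : C * √((d : ℝ) + 1) ≤ 2 ^ d := by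
    refine (pow_le_pow_iff_left₀ (by positivity) (by positivity) two_ne_zero).mp ?_
    rw [mul_pow, Real.sq_sqrt (by positivity), ← pow_mul, mul_comm d, pow_mul]
    exact_mod_cast Nat.choose_half_sq_mul_le d
  have hC' : (C : ℝ) / 2 ^ d ≤ 1 / √((d : ℝ) + 1) := by
    rwa [div_le_div_iff₀ (by positivity) hsqrt, one_mul]
  calc 1 / 2 - (k + 1) / √((d : ℝ) + 1) ≤ 1 / 2 - (k + 1) * (C / 2 ^ d) := by
        have := mul_le_mul_of_nonneg_left hC' (by positivity : (0 : ℝ) ≤ k + 1)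
        rw [mul_one_div] at this
        linarith
    _ ≤ P / 2 ^ d := by
        rw [le_div_iff₀ (by positivity), sub_mul, mul_assoc, div_mul_cancel₀ _ (by positivity)]
        linarith

lemma one_sub_one_div_le_one_sub_one_div_sq_pow (d : ℕ) :
    1 - 1 / (d : ℝ) ≤ (1 - 1 / (d : ℝ) ^ 2) ^ d := by
  rcases Nat.eq_zero_or_pos d with rfl | hd
  · simp
  have hd' : (1 : ℝ) ≤ d := by exact_mod_cast hd
  have hsq : 1 / (d : ℝ) ^ 2 ≤ 1 := div_le_one_of_le₀ (by nlinarith) (by positivity)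
  calc 1 - 1 / (d : ℝ) = 1 + d * -(1 / (d : ℝ) ^ 2) := by field_simp; ring
    _ ≤ (1 + -(1 / (d : ℝ) ^ 2)) ^ d := one_add_mul_le_pow (by linarith) d
    _ = (1 - 1 / (d : ℝ) ^ 2) ^ d := by ring

noncomputable def densityBound (k d : ℕ) : ℝ := (1 / 2 - (k + 1) / √(d + 1)) * (1 - 1 / (d : ℝ))

lemma densityBound_le (k d : ℕ) (hd : 1 ≤ d) :
    densityBound k d ≤ (#{W : Finset (Fin d) | d / 2 + k + 1 ≤ #W} : ℝ) *
        (((d ^ 2 - 1 : ℕ) : ℝ) / ((2 * d ^ 2 : ℕ) : ℝ)) ^ d := by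
  have hKM : ((d ^ 2 - 1 : ℕ) : ℝ) / ((2 * d ^ 2 : ℕ) : ℝ) = (1 - 1 / (d : ℝ) ^ 2) / 2 := by
    rw [Nat.cast_sub (Nat.one_le_pow _ _ hd)]
    push_cast
    field_simp
  rw [densityBound, hKM, div_pow, mul_div_assoc', mul_div_right_comm]
  refine mul_le_mul (half_sub_le_card_filter_div_two_pow d k)
    (one_sub_one_div_le_one_sub_one_div_sq_pow d) ?_ (by positivity)
  rw [sub_nonneg, div_le_one (by exact_mod_cast hd)]
  exact_mod_cast hd

lemma tendsto_densityBound (k : ℕ) : Tendsto (densityBound k) atTop (𝓝 (1 / 2)) := by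
  have hsqrt : Tendsto (fun d : ℕ => √((d : ℝ) + 1)) atTop atTop :=
    Real.tendsto_sqrt_atTop.comp (tendsto_atTop_add_const_right _ _ tendsto_natCast_atTop_atTop)
  have h := ((tendsto_const_nhds (x := (1 / 2 : ℝ))).sub (hsqrt.const_div_atTop (k + 1 : ℝ))).mul
    ((tendsto_const_nhds (x := (1 : ℝ))).sub tendsto_one_div_atTop_nhds_zero_nat)
  unfold densityBound
  simpa using h

/-- For `δ < 1/2` and `k ∈ ℕ`, for all sufficiently large `d` there is an `ε > 0`
such that `H̃(α; k, ε)` is `δ`-nonrecurrent for every `α ∈ 𝕋^d`. -/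
theorem Htilde_nonrecurrent (δ : ℝ) (hδ : δ < 1 / 2) (k : ℕ) :
    ∃ d₀ : ℕ, ∀ d ≥ d₀, ∃ ε > (0 : ℝ), ∀ α : Fin d → UnitAddCircle,
      IntNonrecurrent δ (Htilde d α k ε) := by
  obtain ⟨d₀, hd₀⟩ := (((tendsto_densityBound k).eventually (lt_mem_nhds hδ)).and
    (eventually_ge_atTop 1)).exists_forall_of_atTop
  refine ⟨d₀, fun d hd => ?_⟩
  obtain ⟨hδd, hd₁⟩ := hd₀ d hd
  have : NeZero (2 * d ^ 2) := ⟨by positivity⟩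
  refine ⟨1 / (4 * d ^ 2), by positivity, fun α => ?_⟩
  obtain ⟨c, hc⟩ :=
    exists_le_upperDensity_arcSet (M := 2 * d ^ 2) (K := d ^ 2 - 1) (by omega) (d / 2 + k + 1) α
  refine ⟨_, hδd.trans_le ((densityBound_le k d hd₁).trans hc),
    fun a ha b hb => sub_notMem_Htilde ?_ (by omega) α c ha hb⟩
  rw [Nat.cast_sub (Nat.one_le_pow _ _ hd₁)]
  push_cast
  rw [div_le_iff₀ (by positivity)]
  field_simp
  nlinarith
end

section
/- Let G be an abelian group, K a Hausdorff topological abelian group, ρ : G → K a group homomorphism, and E ⊆ G a set with ρ(E) dense in K. Let U ⊆ K be open. Then for every finite set V ⊆ K there is a family (g_v)_{v ∈ V} of elements of E such that whenever v, v' ∈ V satisfy v − v' ∈ U, we have g_v − g_{v'} ∈ ρ⁻¹(U) ∩ (E−E). Consequently, if the Cayley graph Cay(U) on K has a finite subgraph with chromatic number at least k, then the Cayley graph Cay(ρ⁻¹(U) ∩ (E−E)) on G has chromatic number at least k. -/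
/-! For a finite configuration `v : ι → K`, the requirements `x i - x j ∈ U` (whenever
`v i - v j ∈ U`) and `x i ≠ x j` (whenever `v i ≠ v j`) cut out an open subset of `K^ι`
containing `v`, since `U` is open and `K` is Hausdorff. As `ρ(E)^ι` is dense in `K^ι`, this
open set contains a family `ρ ∘ g` with `g : ι → E`. Applied to the vertices of a finite
subgraph of `Cay(U)`, the family `g` is a graph homomorphism into `Cay(ρ⁻¹(U) ∩ (E - E))`,
which can only raise the chromatic number. -/

open Pointwise

/-- The Cayley graph of `S ⊆ Γ`: vertices are the elements of `Γ`, with `x, y`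
adjacent iff `x - y ∈ S` or `y - x ∈ S`. -/
def cayleyGraph {Γ : Type*} [AddCommGroup Γ] (S : Set Γ) : SimpleGraph Γ :=
  SimpleGraph.fromRel (fun x y => x - y ∈ S)

theorem isOpen_setOf_forall_ne {ι X : Type*} [Finite ι] [TopologicalSpace X] [T2Space X]
    (P : ι → ι → Prop) : IsOpen {x : ι → X | ∀ i j, P i j → x i ≠ x j} := by
  simp only [Set.ofPred_forall]
  exact isOpen_iInter_of_finite fun i => isOpen_iInter_of_finite fun j =>
    isOpen_iInter_of_finite fun _ => isOpen_ne_fun (continuous_apply i) (continuous_apply j)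

section
variable {ι K : Type*} [Finite ι] [AddGroup K] [TopologicalSpace K] [IsTopologicalAddGroup K]

theorem isOpen_setOf_forall_sub_mem {U : Set K} (hU : IsOpen U) (P : ι → ι → Prop) :
    IsOpen {x : ι → K | ∀ i j, P i j → x i - x j ∈ U} := by
  simp only [Set.ofPred_forall]
  exact isOpen_iInter_of_finite fun i => isOpen_iInter_of_finite fun j =>
    isOpen_iInter_of_finite fun _ => hU.preimage ((continuous_apply i).sub (continuous_apply j))

theorem Dense.exists_pi_mem_sub_mem_ne [T2Space K] {D : Set K} (hD : Dense D) {U : Set K}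
    (hU : IsOpen U) (v : ι → K) :
    ∃ x : ι → K, (∀ i, x i ∈ D) ∧ (∀ i j, v i - v j ∈ U → x i - x j ∈ U) ∧
      ∀ i j, v i ≠ v j → x i ≠ x j := by
  obtain ⟨x, hxD, hxU, hxne⟩ := (dense_pi Set.univ fun _ _ => hD).exists_mem_open
    ((isOpen_setOf_forall_sub_mem hU _).inter (isOpen_setOf_forall_ne _))
    ⟨v, fun _ _ => id, fun _ _ => id⟩
  exact ⟨x, fun i => hxD i trivial, hxU, hxne⟩

end

theorem exists_mem_sub_mem_preimage_of_dense_image {ι G K : Type*} [Finite ι] [AddCommGroup G]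
    [AddCommGroup K] [TopologicalSpace K] [IsTopologicalAddGroup K] [T2Space K]
    (ρ : G →+ K) {E : Set G} (hE : Dense (ρ '' E)) {U : Set K} (hU : IsOpen U) (v : ι → K) :
    ∃ g : ι → G, (∀ i, g i ∈ E) ∧ (∀ i j, v i - v j ∈ U → g i - g j ∈ ρ ⁻¹' U ∩ (E - E)) ∧
      ∀ i j, v i ≠ v j → g i ≠ g j := by
  obtain ⟨x, hxE, hxU, hxne⟩ := hE.exists_pi_mem_sub_mem_ne hU v
  choose g hgE hgx using hxE
  refine ⟨g, hgE, fun i j hij => ⟨?_, Set.sub_mem_sub (hgE i) (hgE j)⟩, fun i j hij h => ?_⟩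
  · simpa only [Set.mem_preimage, map_sub, hgx] using hxU i j hij
  · exact hxne i j hij (by rw [← hgx, ← hgx, h])

theorem cayleyGraph_adj {Γ : Type*} [AddCommGroup Γ] {S : Set Γ} {x y : Γ} :
    (cayleyGraph S).Adj x y ↔ x ≠ y ∧ (x - y ∈ S ∨ y - x ∈ S) :=
  SimpleGraph.fromRel_adj _ _ _

/-- Lifting chromatic recurrence through a homomorphism with dense image on `E`:
for every finite `V ⊆ K` there is a family `(g_v)_{v ∈ V}` in `E` with
`v - v' ∈ U → g_v - g_{v'} ∈ ρ⁻¹(U) ∩ (E - E)`; consequently, if `Cay(U)` has a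
finite subgraph with chromatic number at least `k`, then so does
`Cay(ρ⁻¹(U) ∩ (E - E))`. -/
theorem copy_cayley {G K : Type*} [AddCommGroup G] [AddCommGroup K]
    [TopologicalSpace K] [IsTopologicalAddGroup K] [T2Space K]
    (ρ : G →+ K) (E : Set G) (hE : Dense (⇑ρ '' E)) (U : Set K) (hU : IsOpen U) :
    (∀ V : Set K, V.Finite → ∃ g : K → G, (∀ v ∈ V, g v ∈ E) ∧
      ∀ v ∈ V, ∀ v' ∈ V, v - v' ∈ U → g v - g v' ∈ ⇑ρ ⁻¹' U ∩ (E - E)) ∧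
    (∀ k : ℕ,
      (∃ (n : ℕ) (H : SimpleGraph (Fin n)) (f : H →g cayleyGraph U),
        Function.Injective ⇑f ∧ (k : ℕ∞) ≤ H.chromaticNumber) →
      (k : ℕ∞) ≤ (cayleyGraph (⇑ρ ⁻¹' U ∩ (E - E))).chromaticNumber) := by
  constructor
  · intro V hV
    have := hV.to_subtype
    obtain ⟨g, hgE, hgU, -⟩ := exists_mem_sub_mem_preimage_of_dense_image ρ hE hU
      ((↑) : V → K)
    have hext (v : V) : Function.extend ((↑) : V → K) g 0 v = g v :=
      Subtype.val_injective.extend_apply g 0 v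
    refine ⟨Function.extend (↑) g 0, fun v hv => ?_, fun v hv v' hv' h => ?_⟩
    · rw [hext ⟨v, hv⟩]
      exact hgE _
    · rw [hext ⟨v, hv⟩, hext ⟨v', hv'⟩]
      exact hgU _ _ h
  · rintro k ⟨n, H, f, -, hk⟩
    obtain ⟨g, -, hgU, hgne⟩ := exists_mem_sub_mem_preimage_of_dense_image ρ hE hU f
    let φ : H →g cayleyGraph (ρ ⁻¹' U ∩ (E - E)) :=
      { toFun := g
        map_rel' := fun {a b} hab => by
          obtain ⟨hne, hdiff⟩ := cayleyGraph_adj.mp (f.map_rel hab)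
          exact cayleyGraph_adj.mpr ⟨hgne a b hne, hdiff.imp (hgU a b) (hgU b a)⟩ }
    exact hk.trans (SimpleGraph.chromaticNumber_mono_of_hom φ)
end

section
/- Let E ⊆ ℤ be an infinite set and d ∈ ℕ. Then there exists α ∈ 𝕋^d such that Eα := {nα : n ∈ E} is topologically dense in 𝕋^d. -/
open Set Metric TopologicalSpace

/-- Solve `n • x = u` with `x` close to `b` on the unit circle. -/
private lemma unit_solve {n : ℤ} (hn : n ≠ 0) (u b : UnitAddCircle) :
    ∃ x : UnitAddCircle, n • x = u ∧ dist x b ≤ 1 / (2 * |(n : ℝ)|) := by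
  induction u using QuotientAddGroup.induction_on with
  | H u =>
  induction b using QuotientAddGroup.induction_on with
  | H b =>
  have hn' : (n : ℝ) ≠ 0 := Int.cast_ne_zero.mpr hn
  have hnpos : 0 < |(n : ℝ)| := abs_pos.mpr hn'
  set m : ℤ := round ((n : ℝ) * b - u) with hm
  set x : ℝ := (u + m) / n with hx
  refine ⟨(x : UnitAddCircle), ?_, ?_⟩
  · have h1 : (n • x : ℝ) = u + m := by
      rw [zsmul_eq_mul, hx]; field_simp
    have h2 : ((m : ℝ) : UnitAddCircle) = 0 := by
      rw [AddCircle.coe_eq_zero_iff]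
      exact ⟨m, by simp⟩
    rw [← AddCircle.coe_zsmul, h1, AddCircle.coe_add, h2, add_zero]
  · have hdist : dist (x : UnitAddCircle) (b : UnitAddCircle) ≤ |x - b| := by
      rw [dist_eq_norm, ← AddCircle.coe_sub, UnitAddCircle.norm_eq]
      have := round_le (x - b) 0
      simpa using this
    refine hdist.trans ?_
    have hxb : x - b = (u + m - n * b) / n := by
      rw [hx]; field_simp
    have h3 : |u + (m : ℝ) - n * b| = |(n : ℝ) * b - u - round ((n : ℝ) * b - u)| := by
      rw [← hm, ← abs_neg]; ring_nf
    have h4 : |(n : ℝ) * b - u - round ((n : ℝ) * b - u)| ≤ 1 / 2 :=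
      abs_sub_round _
    rw [hxb, abs_div]
    rw [div_le_div_iff₀ hnpos (by positivity)]
    calc |u + (m : ℝ) - n * b| * (2 * |(n : ℝ)|)
        ≤ (1 / 2) * (2 * |(n : ℝ)|) := by
          apply mul_le_mul_of_nonneg_right _ (by positivity)
          rw [h3]; exact h4
      _ = 1 * |(n : ℝ)| := by ring

/-- If `E ⊆ ℤ` is infinite and `d ∈ ℕ`, then there exists `α ∈ 𝕋^d` such that
`Eα = {nα : n ∈ E}` is topologically dense in `𝕋^d`. -/
theorem exists_dense_orbit_of_infinite (E : Set ℤ) (hE : E.Infinite) (d : ℕ) :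
    ∃ α : Fin d → UnitAddCircle,
      Dense {x : Fin d → UnitAddCircle | ∃ n ∈ E, n • α = x} := by
  -- E is unbounded
  have hub : ∀ N : ℕ, ∃ n ∈ E, (N : ℝ) < |(n : ℝ)| := by
    intro N
    by_contra h
    push_neg at h
    apply hE
    apply Set.Finite.subset (Set.finite_Icc (-(N : ℤ)) N)
    intro n hn
    have h1 : |(n : ℝ)| ≤ (N : ℝ) := h n hn
    have h2 : |n| ≤ (N : ℤ) := by rw [← Int.cast_abs] at h1; exact_mod_cast h1
    simpa [Set.mem_Icc] using abs_le.mp h2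
  -- for each open nonempty U, the set of α hitting U is open and dense
  have hopen : ∀ U : Set (Fin d → UnitAddCircle), IsOpen U →
      IsOpen {α : Fin d → UnitAddCircle | ∃ n ∈ E, n • α ∈ U} := by
    intro U hU
    have : {α : Fin d → UnitAddCircle | ∃ n ∈ E, n • α ∈ U}
        = ⋃ n ∈ E, (fun α : Fin d → UnitAddCircle => n • α) ⁻¹' U := by
      ext α; simp
    rw [this]
    exact isOpen_biUnion fun n _ => hU.preimage (continuous_zsmul n)
  have hdense : ∀ U : Set (Fin d → UnitAddCircle), U.Nonempty →
      Dense {α : Fin d → UnitAddCircle | ∃ n ∈ E, n • α ∈ U} := by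
    intro U ⟨u, hu⟩
    rw [Metric.dense_iff]
    intro β ε hε
    obtain ⟨N, hN⟩ := exists_nat_gt (1 / ε)
    obtain ⟨n, hnE, hn⟩ := hub N
    have hNnonneg : (0 : ℝ) ≤ N := Nat.cast_nonneg N
    have hnpos : 0 < |(n : ℝ)| := lt_of_le_of_lt hNnonneg hn
    have hn0 : n ≠ 0 := by
      intro h; rw [h] at hnpos; simp at hnpos
    have hsmall : 1 / (2 * |(n : ℝ)|) < ε := by
      have h1 : 1 / ε < |(n : ℝ)| := hN.trans hn
      rw [div_lt_iff₀ (by positivity)]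
      have h2 : 1 < ε * |(n : ℝ)| := by
        rw [div_lt_iff₀ hε] at h1; linarith [h1]
      nlinarith [hnpos, hε]
    choose x hx1 hx2 using fun i => unit_solve hn0 (u i) (β i)
    refine ⟨x, ?_, ⟨n, hnE, ?_⟩⟩
    · rw [Metric.mem_ball, dist_pi_lt_iff hε]
      exact fun i => lt_of_le_of_lt (hx2 i) hsmall
    · have : n • x = u := funext fun i => hx1 i
      rw [this]; exact hu
  -- Baire category argument
  obtain ⟨B, hBc, -, hB⟩ := exists_countable_basis (Fin d → UnitAddCircle)
  set S : Set (Set (Fin d → UnitAddCircle)) := {U ∈ B | U.Nonempty} with hS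
  have hSc : S.Countable := hBc.mono (Set.sep_subset _ _)
  set F : Set (Fin d → UnitAddCircle) → Set (Fin d → UnitAddCircle) :=
    fun U => {α | ∃ n ∈ E, n • α ∈ U} with hF
  have hd : Dense (⋂₀ (F '' S)) := by
    apply dense_sInter_of_isOpen
    · rintro s ⟨U, ⟨hUB, _⟩, rfl⟩
      exact hopen U (hB.isOpen hUB)
    · exact hSc.image F
    · rintro s ⟨U, ⟨_, hUne⟩, rfl⟩
      exact hdense U hUne
  obtain ⟨α, hα⟩ := hd.nonempty
  refine ⟨α, ?_⟩
  rw [dense_iff_inter_open]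
  rintro V hV ⟨v, hv⟩
  obtain ⟨U, hUB, hvU, hUV⟩ := hB.exists_subset_of_mem_open hv hV
  have hUS : U ∈ S := ⟨hUB, ⟨v, hvU⟩⟩
  have : α ∈ F U := hα _ ⟨U, hUS, rfl⟩
  obtain ⟨n, hnE, hnU⟩ := this
  exact ⟨n • α, hUV hnU, ⟨n, hnE, rfl⟩⟩
end
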